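/- arXiv:2604.03215 — 8 statements merged into one kernel-verified Lean document; each statement's English description precedes it below -/
import Mathlib

section
/- Let (X,Y) be a pair of real-valued random variables on a probability space whose marginal cumulative distribution functions F_X and F_Y are continuous, and let C be a copula such that P(X ≤ x, Y ≤ y) = C(F_X(x), F_Y(y)) for all x, y ∈ ℝ. Then for every v ∈ (0,1), E[F_X(X) · 1{F_Y(Y) ≤ v}] = v − ∫₀¹ C(u,v) du; equivalently, the transformed conditional tail expectation satisfies E[F_X(X) | F_Y(Y) ≤ v] = 1 − (1/v) ∫₀¹ C(u,v) du. -/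
/-!
Because `F_Y` is continuous, `{F_Y(Y) ≤ v} = {Y ≤ q}` for a point `q` with `F_Y(q) = v`, and
likewise `{F_X(X) ≤ t} = {X ≤ p}` with `F_X(p) = t`. Hence on the event `A = {Y ≤ q}`, of
probability `v`, the `[0,1]`-valued variable `F_X(X)` satisfies `P(F_X(X) ≤ t, A) = C(t, v)` for
`t ∈ (0,1)`, and the layer-cake formula gives `E[F_X(X); A] = ∫₀¹ (v - C(t, v)) dt`.
-/

open MeasureTheory Filter Set

/-- A bivariate copula: boundary conditions and the 2-increasing property on `[0,1]²`. -/
def IsCopula (C : ℝ → ℝ → ℝ) : Prop :=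
  (∀ u ∈ Set.Icc (0:ℝ) 1, C u 0 = 0 ∧ C 0 u = 0 ∧ C u 1 = u ∧ C 1 u = u) ∧
  (∀ u ∈ Set.Icc (0:ℝ) 1, ∀ v ∈ Set.Icc (0:ℝ) 1, C u v ∈ Set.Icc (0:ℝ) 1) ∧
  (∀ u₁ u₂ v₁ v₂ : ℝ, 0 ≤ u₁ → u₁ ≤ u₂ → u₂ ≤ 1 → 0 ≤ v₁ → v₁ ≤ v₂ → v₂ ≤ 1 →
    0 ≤ C u₂ v₂ - C u₁ v₂ - C u₂ v₁ + C u₁ v₁)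

open ProbabilityTheory

lemma Monotone.exists_eq_and_forall_le_iff_le {F : ℝ → ℝ} (hm : Monotone F)
    (hc : Continuous F) {a b u : ℝ} (ha : F a ≤ u) (hb : u < F b) :
    ∃ q, F q = u ∧ ∀ x, F x ≤ u ↔ x ≤ q := by
  set S : Set ℝ := {x | F x ≤ u}
  have hbdd : BddAbove S := ⟨b, fun x hx => le_of_lt (hm.reflect_lt (hx.trans_lt hb))⟩
  have hq : sSup S ∈ S := (isClosed_le hc continuous_const).csSup_mem ⟨a, ha⟩ hbdd
  have hge : Ici (sSup S) ⊆ {x | u ≤ F x} := by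
    rw [← closure_Ioi, (isClosed_le continuous_const hc).closure_subset_iff]
    exact fun x hx => show u ≤ F x from le_of_not_ge fun hxu => (le_csSup hbdd hxu).not_gt hx
  exact ⟨sSup S, le_antisymm hq (hge (mem_Ici.2 le_rfl)),
    fun x => ⟨le_csSup hbdd, fun hx => (hm hx).trans hq⟩⟩

lemma ProbabilityTheory.exists_cdf_eq_and_forall_cdf_le_iff (ν : Measure ℝ)
    [IsProbabilityMeasure ν] (hc : Continuous (cdf ν)) {u : ℝ} (hu : u ∈ Ioo 0 1) :
    ∃ q, cdf ν q = u ∧ ∀ x, cdf ν x ≤ u ↔ x ≤ q := by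
  obtain ⟨a, ha⟩ := ((tendsto_cdf_atBot ν).eventually_lt_const hu.1).exists
  obtain ⟨b, hb⟩ := ((tendsto_cdf_atTop ν).eventually_const_lt hu.2).exists
  exact (monotone_cdf ν).exists_eq_and_forall_le_iff_le hc ha.le hb

lemma ProbabilityTheory.cdf_map_eq_of_forall_eq {Ω : Type*} [MeasurableSpace Ω] {μ : Measure Ω}
    [IsProbabilityMeasure μ] {X : Ω → ℝ} (hX : Measurable X) {F : ℝ → ℝ}
    (hF : ∀ x, F x = (μ {ω | X ω ≤ x}).toReal) : cdf (μ.map X) = F := by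
  have := Measure.isProbabilityMeasure_map (μ := μ) hX.aemeasurable
  ext x
  rw [hF, cdf_eq_real, measureReal_def, Measure.map_apply hX measurableSet_Iic]
  rfl

lemma MeasureTheory.integral_eq_measureReal_univ_sub_intervalIntegral {α : Type*}
    [MeasurableSpace α] {ρ : Measure α} [IsFiniteMeasure ρ] {f : α → ℝ} (hf : Measurable f)
    (h0 : ∀ ω, 0 ≤ f ω) (h1 : ∀ ω, f ω ≤ 1) :
    ∫ ω, f ω ∂ρ = ρ.real univ - ∫ t in (0:ℝ)..1, ρ.real {ω | f ω ≤ t} := by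
  have hint : Integrable f ρ := (integrable_const (1:ℝ)).mono' hf.aestronglyMeasurable
    (ae_of_all _ fun ω => (abs_of_nonneg (h0 ω)).trans_le (h1 ω))
  have hmono : Monotone fun t => ρ.real {ω | f ω ≤ t} :=
    fun s t hst => measureReal_mono fun ω hω => le_trans hω hst
  have hcompl (t : ℝ) : ρ.real {ω | t < f ω} = ρ.real univ - ρ.real {ω | f ω ≤ t} := by
    have hmeas : MeasurableSet {ω | f ω ≤ t} := hf measurableSet_Iic
    rw [← measureReal_compl hmeas, compl_ofPred]
    simp only [not_le]
  rw [hint.integral_eq_integral_meas_lt (ae_of_all _ h0),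
    setIntegral_eq_of_subset_of_forall_sdiff_eq_zero measurableSet_Ioi Ioc_subset_Ioi_self ?_,
    ← intervalIntegral.integral_of_le zero_le_one,
    intervalIntegral.integral_congr fun t _ => hcompl t,
    intervalIntegral.integral_sub intervalIntegrable_const hmono.intervalIntegrable,
    intervalIntegral.integral_const]
  · simp
  · rintro t ⟨ht0, ht1⟩
    have hempty : {ω | t < f ω} = ∅ :=
      eq_empty_of_forall_notMem fun ω hω => ht1 ⟨ht0, (hω.trans_le (h1 ω)).le⟩
    simp [hempty]

theorem tcte_copula_representation_general
    {Ω : Type*} [MeasurableSpace Ω] (μ : Measure Ω) [IsProbabilityMeasure μ]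
    (X Y : Ω → ℝ) (hX : Measurable X) (hY : Measurable Y)
    (Fx Fy : ℝ → ℝ)
    (hFx : ∀ x, Fx x = (μ {ω | X ω ≤ x}).toReal)
    (hFy : ∀ y, Fy y = (μ {ω | Y ω ≤ y}).toReal)
    (hFxc : Continuous Fx) (hFyc : Continuous Fy)
    (C : ℝ → ℝ → ℝ)
    (hlink : ∀ x y, (μ {ω | X ω ≤ x ∧ Y ω ≤ y}).toReal = C (Fx x) (Fy y))
    (v : ℝ) (hv : v ∈ Set.Ioo (0:ℝ) 1) :
    (∫ ω in {ω | Fy (Y ω) ≤ v}, Fx (X ω) ∂μ) = v - ∫ u in (0:ℝ)..1, C u v ∧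
    (∫ ω in {ω | Fy (Y ω) ≤ v}, Fx (X ω) ∂μ) / (μ {ω | Fy (Y ω) ≤ v}).toReal
      = 1 - (1/v) * ∫ u in (0:ℝ)..1, C u v := by
  have := Measure.isProbabilityMeasure_map (μ := μ) hX.aemeasurable
  have := Measure.isProbabilityMeasure_map (μ := μ) hY.aemeasurable
  obtain rfl := cdf_map_eq_of_forall_eq hX hFx
  obtain rfl := cdf_map_eq_of_forall_eq hY hFy
  obtain ⟨qv, hqv, hYv⟩ := exists_cdf_eq_and_forall_cdf_le_iff _ hFyc hv
  have hA : {ω | cdf (μ.map Y) (Y ω) ≤ v} = {ω | Y ω ≤ qv} := by simp only [hYv]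
  have hμA : μ.real {ω | Y ω ≤ qv} = v := by rw [← hqv, hFy, measureReal_def]
  have hXm : Measurable fun ω => cdf (μ.map X) (X ω) := hFxc.measurable.comp hX
  have hlevel : ∀ t ∈ Ioo (0:ℝ) 1,
      (μ.restrict {ω | Y ω ≤ qv}).real {ω | cdf (μ.map X) (X ω) ≤ t} = C t v := by
    intro t ht
    obtain ⟨q, hq, hXt⟩ := exists_cdf_eq_and_forall_cdf_le_iff _ hFxc ht
    have hset : {ω | cdf (μ.map X) (X ω) ≤ t} ∩ {ω | Y ω ≤ qv}
        = {ω | X ω ≤ q ∧ Y ω ≤ qv} := by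
      simp only [hXt, ofPred_and]
    rw [measureReal_restrict_apply (measurableSet_le hXm measurable_const), hset, measureReal_def,
      hlink, hq, hqv]
  have hmain : ∫ ω in {ω | cdf (μ.map Y) (Y ω) ≤ v}, cdf (μ.map X) (X ω) ∂μ
      = v - ∫ u in (0:ℝ)..1, C u v := by
    rw [hA, integral_eq_measureReal_univ_sub_intervalIntegral hXm
      (fun ω => cdf_nonneg _ _) (fun ω => cdf_le_one _ _), measureReal_restrict_apply_univ, hμA,
      intervalIntegral.integral_congr_Ioo_of_le zero_le_one hlevel]
  refine ⟨hmain, ?_⟩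
  rw [hmain, hA, ← measureReal_def, hμA, one_div_mul_eq_div, sub_div, div_self hv.1.ne']

/-- If `(X,Y)` has continuous marginal CDFs `Fx`, `Fy` and copula `C`
(`P(X ≤ x, Y ≤ y) = C (Fx x) (Fy y)`), then for every `v ∈ (0,1)`,
`E[Fx(X) · 1{Fy(Y) ≤ v}] = v − ∫₀¹ C(u,v) du`; equivalently
`E[Fx(X) | Fy(Y) ≤ v] = 1 − (1/v) ∫₀¹ C(u,v) du`. -/
theorem tcte_copula_representation
    {Ω : Type*} [MeasurableSpace Ω] (μ : Measure Ω) [IsProbabilityMeasure μ]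
    (X Y : Ω → ℝ) (hX : Measurable X) (hY : Measurable Y)
    (Fx Fy : ℝ → ℝ)
    (hFx : ∀ x, Fx x = (μ {ω | X ω ≤ x}).toReal)
    (hFy : ∀ y, Fy y = (μ {ω | Y ω ≤ y}).toReal)
    (hFxc : Continuous Fx) (hFyc : Continuous Fy)
    (C : ℝ → ℝ → ℝ) (hC : IsCopula C)
    (hlink : ∀ x y, (μ {ω | X ω ≤ x ∧ Y ω ≤ y}).toReal = C (Fx x) (Fy y))
    (v : ℝ) (hv : v ∈ Set.Ioo (0:ℝ) 1) :
    (∫ ω in {ω | Fy (Y ω) ≤ v}, Fx (X ω) ∂μ) = v - ∫ u in (0:ℝ)..1, C u v ∧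
    (∫ ω in {ω | Fy (Y ω) ≤ v}, Fx (X ω) ∂μ) / (μ {ω | Fy (Y ω) ≤ v}).toReal
      = 1 - (1/v) * ∫ u in (0:ℝ)..1, C u v :=
  tcte_copula_representation_general μ X Y hX hY Fx Fy hFx hFy hFxc hFyc C hlink v hv
end

section
/- Let C be a copula. If C satisfies positive quadrant dependence, C(u,v) ≥ uv for all (u,v) ∈ [0,1]², then for every v ∈ (0,1] both χ^{Y→X}_C(v) ≤ 1/2 and χ^{X→Y}_C(v) ≤ 1/2. If instead C satisfies negative quadrant dependence, C(u,v) ≤ uv for all (u,v) ∈ [0,1]², then for every v ∈ (0,1] both χ^{Y→X}_C(v) ≥ 1/2 and χ^{X→Y}_C(v) ≥ 1/2. In particular, under PQD or NQD, the directional tail dependence measure χ^{Y→X}_C(v) − χ^{X→Y}_C(v) lies in [−1/2, 1/2]. -/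
open MeasureTheory Filter Set

/-- `χ^{Y→X}_C(v) = 1 − (1/v) ∫₀¹ C(u,v) du`. -/
noncomputable def chiYX (C : ℝ → ℝ → ℝ) (v : ℝ) : ℝ :=
  1 - (1/v) * ∫ u in (0:ℝ)..1, C u v

/-- `χ^{X→Y}_C(v) = 1 − (1/v) ∫₀¹ C(v,u) du`. -/
noncomputable def chiXY (C : ℝ → ℝ → ℝ) (v : ℝ) : ℝ :=
  1 - (1/v) * ∫ u in (0:ℝ)..1, C v u

/-- Under PQD (`C(u,v) ≥ uv`) both TCTEs are `≤ 1/2`; under NQD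
(`C(u,v) ≤ uv`) both are `≥ 1/2`. In either case the directional tail dependence measure
`χ^{Y→X}_C(v) − χ^{X→Y}_C(v)` lies in `[−1/2, 1/2]`. -/
theorem tcte_quadrant_dependence
    (C : ℝ → ℝ → ℝ) (hC : IsCopula C) :
    ((∀ u ∈ Set.Icc (0:ℝ) 1, ∀ v ∈ Set.Icc (0:ℝ) 1, u * v ≤ C u v) →
      ∀ v ∈ Set.Ioc (0:ℝ) 1, chiYX C v ≤ 1/2 ∧ chiXY C v ≤ 1/2) ∧
    ((∀ u ∈ Set.Icc (0:ℝ) 1, ∀ v ∈ Set.Icc (0:ℝ) 1, C u v ≤ u * v) →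
      ∀ v ∈ Set.Ioc (0:ℝ) 1, 1/2 ≤ chiYX C v ∧ 1/2 ≤ chiXY C v) ∧
    (((∀ u ∈ Set.Icc (0:ℝ) 1, ∀ v ∈ Set.Icc (0:ℝ) 1, u * v ≤ C u v) ∨
      (∀ u ∈ Set.Icc (0:ℝ) 1, ∀ v ∈ Set.Icc (0:ℝ) 1, C u v ≤ u * v)) →
      ∀ v ∈ Set.Ioc (0:ℝ) 1, chiYX C v - chiXY C v ∈ Set.Icc (-(1/2) : ℝ) (1/2)) := by
  obtain ⟨hb, hrange, h2inc⟩ := hC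
  have huicc : Set.uIcc (0:ℝ) 1 = Set.Icc (0:ℝ) 1 := Set.uIcc_of_le zero_le_one
  -- monotone in first argument
  have mono1 : ∀ v ∈ Set.Icc (0:ℝ) 1, MonotoneOn (fun u => C u v) (Set.Icc (0:ℝ) 1) := by
    intro v hv u₁ hu₁ u₂ hu₂ h12
    have h := h2inc u₁ u₂ 0 v hu₁.1 h12 hu₂.2 le_rfl hv.1 hv.2
    have e1 := (hb u₁ hu₁).1
    have e2 := (hb u₂ hu₂).1
    simp only
    linarith
  have mono2 : ∀ v ∈ Set.Icc (0:ℝ) 1, MonotoneOn (fun u => C v u) (Set.Icc (0:ℝ) 1) := by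
    intro v hv u₁ hu₁ u₂ hu₂ h12
    have h := h2inc 0 v u₁ u₂ le_rfl hv.1 hv.2 hu₁.1 h12 hu₂.2
    have e1 := (hb u₁ hu₁).2.1
    have e2 := (hb u₂ hu₂).2.1
    simp only
    linarith
  have int1 : ∀ v ∈ Set.Icc (0:ℝ) 1, IntervalIntegrable (fun u => C u v) volume 0 1 := by
    intro v hv
    exact (huicc ▸ mono1 v hv).intervalIntegrable
  have int2 : ∀ v ∈ Set.Icc (0:ℝ) 1, IntervalIntegrable (fun u => C v u) volume 0 1 := by
    intro v hv
    exact (huicc ▸ mono2 v hv).intervalIntegrable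
  have intuv : ∀ v : ℝ, IntervalIntegrable (fun u => u * v) volume 0 1 :=
    fun v => ((continuous_id.mul continuous_const).intervalIntegrable 0 1)
  have intc : ∀ v : ℝ, IntervalIntegrable (fun _ : ℝ => v) volume 0 1 :=
    fun v => intervalIntegrable_const
  have iuv : ∀ v : ℝ, (∫ u in (0:ℝ)..1, u * v) = v / 2 := by
    intro v
    rw [intervalIntegral.integral_mul_const, integral_id]
    ring
  -- integral bounds
  have bnds : ∀ v ∈ Set.Ioc (0:ℝ) 1,
      (0 ≤ ∫ u in (0:ℝ)..1, C u v) ∧ (∫ u in (0:ℝ)..1, C u v) ≤ v ∧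
      (0 ≤ ∫ u in (0:ℝ)..1, C v u) ∧ (∫ u in (0:ℝ)..1, C v u) ≤ v := by
    intro v hv
    have hv1 : v ∈ Set.Icc (0:ℝ) 1 := ⟨hv.1.le, hv.2⟩
    have h1icc : (1:ℝ) ∈ Set.Icc (0:ℝ) 1 := by constructor <;> norm_num
    refine ⟨?_, ?_, ?_, ?_⟩
    · apply intervalIntegral.integral_nonneg zero_le_one
      intro u hu; exact (hrange u hu v hv1).1
    · have := intervalIntegral.integral_mono_on zero_le_one (int1 v hv1) (intc v)
        (fun u hu => by
          have := mono1 v hv1 hu h1icc hu.2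
          simp only at this
          rw [(hb v hv1).2.2.2] at this
          exact this)
      simpa using this
    · apply intervalIntegral.integral_nonneg zero_le_one
      intro u hu; exact (hrange v hv1 u hu).1
    · have := intervalIntegral.integral_mono_on zero_le_one (int2 v hv1) (intc v)
        (fun u hu => by
          have := mono2 v hv1 hu h1icc hu.2
          simp only at this
          rw [(hb v hv1).2.2.1] at this
          exact this)
      simpa using this
  have pqd : (∀ u ∈ Set.Icc (0:ℝ) 1, ∀ v ∈ Set.Icc (0:ℝ) 1, u * v ≤ C u v) →
      ∀ v ∈ Set.Ioc (0:ℝ) 1, chiYX C v ≤ 1/2 ∧ chiXY C v ≤ 1/2 := by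
    intro hP v hv
    have hv1 : v ∈ Set.Icc (0:ℝ) 1 := ⟨hv.1.le, hv.2⟩
    have hvpos := hv.1
    have h1 : v / 2 ≤ ∫ u in (0:ℝ)..1, C u v := by
      rw [← iuv v]
      exact intervalIntegral.integral_mono_on zero_le_one (intuv v) (int1 v hv1)
        (fun u hu => hP u hu v hv1)
    have h2 : v / 2 ≤ ∫ u in (0:ℝ)..1, C v u := by
      rw [← iuv v]
      refine intervalIntegral.integral_mono_on zero_le_one (intuv v) (int2 v hv1) ?_
      intro u hu
      have := hP v hv1 u hu
      linarith [this]
    constructor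
    · unfold chiYX
      have : (1/v) * (v/2) ≤ (1/v) * ∫ u in (0:ℝ)..1, C u v :=
        mul_le_mul_of_nonneg_left h1 (by positivity)
      have e : (1/v) * (v/2) = 1/2 := by field_simp
      linarith
    · unfold chiXY
      have : (1/v) * (v/2) ≤ (1/v) * ∫ u in (0:ℝ)..1, C v u :=
        mul_le_mul_of_nonneg_left h2 (by positivity)
      have e : (1/v) * (v/2) = 1/2 := by field_simp
      linarith
  have nqd : (∀ u ∈ Set.Icc (0:ℝ) 1, ∀ v ∈ Set.Icc (0:ℝ) 1, C u v ≤ u * v) →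
      ∀ v ∈ Set.Ioc (0:ℝ) 1, 1/2 ≤ chiYX C v ∧ 1/2 ≤ chiXY C v := by
    intro hN v hv
    have hv1 : v ∈ Set.Icc (0:ℝ) 1 := ⟨hv.1.le, hv.2⟩
    have hvpos := hv.1
    have h1 : (∫ u in (0:ℝ)..1, C u v) ≤ v / 2 := by
      rw [← iuv v]
      exact intervalIntegral.integral_mono_on zero_le_one (int1 v hv1) (intuv v)
        (fun u hu => hN u hu v hv1)
    have h2 : (∫ u in (0:ℝ)..1, C v u) ≤ v / 2 := by
      rw [← iuv v]
      refine intervalIntegral.integral_mono_on zero_le_one (int2 v hv1) (intuv v) ?_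
      intro u hu
      have := hN v hv1 u hu
      linarith [this]
    constructor
    · unfold chiYX
      have : (1/v) * (∫ u in (0:ℝ)..1, C u v) ≤ (1/v) * (v/2) :=
        mul_le_mul_of_nonneg_left h1 (by positivity)
      have e : (1/v) * (v/2) = 1/2 := by field_simp
      linarith
    · unfold chiXY
      have : (1/v) * (∫ u in (0:ℝ)..1, C v u) ≤ (1/v) * (v/2) :=
        mul_le_mul_of_nonneg_left h2 (by positivity)
      have e : (1/v) * (v/2) = 1/2 := by field_simp
      linarith
  -- chi in [0,1] always
  have chibnd : ∀ v ∈ Set.Ioc (0:ℝ) 1,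
      (0 ≤ chiYX C v ∧ chiYX C v ≤ 1) ∧ (0 ≤ chiXY C v ∧ chiXY C v ≤ 1) := by
    intro v hv
    obtain ⟨b1, b2, b3, b4⟩ := bnds v hv
    have hvpos := hv.1
    have e : (1/v) * v = 1 := by field_simp
    unfold chiYX chiXY
    have m1 : (1/v) * (∫ u in (0:ℝ)..1, C u v) ≤ (1/v) * v :=
      mul_le_mul_of_nonneg_left b2 (by positivity)
    have m2 : (1/v) * (∫ u in (0:ℝ)..1, C v u) ≤ (1/v) * v :=
      mul_le_mul_of_nonneg_left b4 (by positivity)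
    have m3 : 0 ≤ (1/v) * (∫ u in (0:ℝ)..1, C u v) := by positivity
    have m4 : 0 ≤ (1/v) * (∫ u in (0:ℝ)..1, C v u) := by positivity
    refine ⟨⟨by linarith, by linarith⟩, ⟨by linarith, by linarith⟩⟩
  refine ⟨pqd, nqd, ?_⟩
  rintro (hP | hN) v hv
  · obtain ⟨p1, p2⟩ := pqd hP v hv
    obtain ⟨⟨c1, _⟩, ⟨c2, _⟩⟩ := chibnd v hv
    constructor <;> simp <;> linarith
  · obtain ⟨p1, p2⟩ := nqd hN v hv
    obtain ⟨⟨_, c1⟩, ⟨_, c2⟩⟩ := chibnd v hv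
    constructor <;> simp <;> linarith
end

section
/- Let C be a copula whose lower tail dependence coefficient equals one, i.e., lim_{v→0⁺} C(v,v)/v = 1. Then lim_{v→0⁺} (1/v) ∫₀¹ C(u,v) du = 1 and lim_{v→0⁺} (1/v) ∫₀¹ C(v,u) du = 1; consequently the limiting transformed conditional tail expectations satisfy χ^{Y→X}_C = 0 and χ^{X→Y}_C = 0, and the limiting directional tail dependence measure χ(X,Y) = χ^{Y→X}_C − χ^{X→Y}_C equals 0. -/
open MeasureTheory Filter Set Topology

lemma copula_mono_fst {C : ℝ → ℝ → ℝ} (hC : IsCopula C) {v : ℝ} (hv : v ∈ Set.Icc (0:ℝ) 1) :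
    MonotoneOn (fun u => C u v) (Set.Icc (0:ℝ) 1) := by
  intro u₁ h₁ u₂ h₂ h12
  have h2i := hC.2.2 u₁ u₂ 0 v h₁.1 h12 h₂.2 le_rfl hv.1 hv.2
  have e1 := (hC.1 u₁ h₁).1
  have e2 := (hC.1 u₂ h₂).1
  simp only
  linarith

lemma copula_swap {C : ℝ → ℝ → ℝ} (hC : IsCopula C) : IsCopula (fun a b => C b a) := by
  obtain ⟨h1, h2, h3⟩ := hC
  refine ⟨fun u hu => ?_, fun u hu v hv => h2 v hv u hu, fun u₁ u₂ v₁ v₂ a b c d e f => ?_⟩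
  · obtain ⟨a, b, c, d⟩ := h1 u hu
    exact ⟨b, a, d, c⟩
  · have := h3 v₁ v₂ u₁ u₂ d e f a b c
    simp only
    linarith

lemma copula_tendsto_aux (C : ℝ → ℝ → ℝ) (hC : IsCopula C)
    (htdc : Filter.Tendsto (fun v => C v v / v) (𝓝[>] (0:ℝ)) (𝓝 1)) :
    Filter.Tendsto (fun v => (1/v) * ∫ u in (0:ℝ)..1, C u v) (𝓝[>] (0:ℝ)) (𝓝 1) := by
  have hmem : Set.Ioo (0:ℝ) 1 ∈ 𝓝[>] (0:ℝ) :=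
    Ioo_mem_nhdsGT_of_mem (by simp : (0:ℝ) ∈ Set.Ico (0:ℝ) 1)
  -- lower bound tends to 1
  have hlow : Filter.Tendsto (fun v => (1 - v) * (C v v / v)) (𝓝[>] (0:ℝ)) (𝓝 1) := by
    have h1 : Filter.Tendsto (fun v : ℝ => 1 - v) (𝓝[>] (0:ℝ)) (𝓝 1) := by
      have h : Filter.Tendsto (fun v : ℝ => 1 - v) (𝓝 (0:ℝ)) (𝓝 (1 - 0)) :=
        ((continuous_const.sub continuous_id).tendsto (0:ℝ))
      simpa using h.mono_left nhdsWithin_le_nhds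
    simpa using h1.mul htdc
  refine tendsto_of_tendsto_of_tendsto_of_le_of_le' hlow tendsto_const_nhds ?_ ?_
  · -- lower bound
    filter_upwards [hmem] with v hv
    have hv0 := hv.1
    have hv1 := hv.2.le
    have hvI : v ∈ Set.Icc (0:ℝ) 1 := ⟨hv0.le, hv1⟩
    have hmono := copula_mono_fst hC hvI
    have hint : IntervalIntegrable (fun u => C u v) volume 0 1 := by
      apply MonotoneOn.intervalIntegrable
      rwa [Set.uIcc_of_le (by norm_num : (0:ℝ) ≤ 1)]
    have hint1 : IntervalIntegrable (fun u => C u v) volume 0 v := by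
      apply hint.mono_set
      rw [Set.uIcc_of_le hv0.le, Set.uIcc_of_le (by norm_num : (0:ℝ) ≤ 1)]
      exact Set.Icc_subset_Icc le_rfl hv1
    have hint2 : IntervalIntegrable (fun u => C u v) volume v 1 := by
      apply hint.mono_set
      rw [Set.uIcc_of_le hv1, Set.uIcc_of_le (by norm_num : (0:ℝ) ≤ 1)]
      exact Set.Icc_subset_Icc hv0.le le_rfl
    have hsplit : (∫ u in (0:ℝ)..1, C u v)
        = (∫ u in (0:ℝ)..v, C u v) + ∫ u in v..(1:ℝ), C u v :=
      (intervalIntegral.integral_add_adjacent_intervals hint1 hint2).symm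
    have hnn : (0:ℝ) ≤ ∫ u in (0:ℝ)..v, C u v := by
      apply intervalIntegral.integral_nonneg hv0.le
      intro u hu
      exact (hC.2.1 u ⟨hu.1, hu.2.trans hv1⟩ v hvI).1
    have hlb : (1 - v) * C v v ≤ ∫ u in v..(1:ℝ), C u v := by
      have : ∫ u in v..(1:ℝ), C v v ≤ ∫ u in v..(1:ℝ), C u v := by
        apply intervalIntegral.integral_mono_on hv1 (intervalIntegrable_const) hint2
        intro u hu
        exact hmono hvI ⟨hv0.le.trans hu.1, hu.2⟩ hu.1
      simpa [mul_comm] using this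
    have hvne : v ≠ 0 := ne_of_gt hv0
    have htotal : (1 - v) * C v v ≤ ∫ u in (0:ℝ)..1, C u v := by
      rw [hsplit]; linarith
    calc (1 - v) * (C v v / v) = (1/v) * ((1 - v) * C v v) := by field_simp
      _ ≤ (1/v) * ∫ u in (0:ℝ)..1, C u v := by
          apply mul_le_mul_of_nonneg_left htotal
          positivity
  · -- upper bound
    filter_upwards [hmem] with v hv
    have hv0 := hv.1
    have hv1 := hv.2.le
    have hvI : v ∈ Set.Icc (0:ℝ) 1 := ⟨hv0.le, hv1⟩
    have hmono := copula_mono_fst hC hvI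
    have hint : IntervalIntegrable (fun u => C u v) volume 0 1 := by
      apply MonotoneOn.intervalIntegrable
      rwa [Set.uIcc_of_le (by norm_num : (0:ℝ) ≤ 1)]
    have hub : (∫ u in (0:ℝ)..1, C u v) ≤ v := by
      have : ∫ u in (0:ℝ)..1, C u v ≤ ∫ u in (0:ℝ)..1, v := by
        apply intervalIntegral.integral_mono_on (by norm_num) hint intervalIntegrable_const
        intro u hu
        have := hmono ⟨hu.1, hu.2⟩ (by norm_num : (1:ℝ) ∈ Set.Icc (0:ℝ) 1) hu.2
        have e := (hC.1 v hvI).2.2.2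
        simpa [e] using this
      simpa using this
    have hvne : v ≠ 0 := ne_of_gt hv0
    calc (1/v) * ∫ u in (0:ℝ)..1, C u v ≤ (1/v) * v := by
          apply mul_le_mul_of_nonneg_left hub; positivity
      _ = 1 := by field_simp

/-- If the lower tail dependence coefficient of the copula `C` equals one,
`lim_{v→0⁺} C(v,v)/v = 1`, then `lim_{v→0⁺} (1/v)∫₀¹ C(u,v) du = 1` and
`lim_{v→0⁺} (1/v)∫₀¹ C(v,u) du = 1`; consequently the limiting TCTEs satisfy
`χ^{Y→X}_C = 0` and `χ^{X→Y}_C = 0`, and the limiting directional tail dependence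
measure is `0`. -/
theorem dtd_null_under_complete_tail_dependence
    (C : ℝ → ℝ → ℝ) (hC : IsCopula C)
    (htdc : Filter.Tendsto (fun v => C v v / v) (𝓝[>] (0:ℝ)) (𝓝 1)) :
    Filter.Tendsto (fun v => (1/v) * ∫ u in (0:ℝ)..1, C u v) (𝓝[>] (0:ℝ)) (𝓝 1) ∧
    Filter.Tendsto (fun v => (1/v) * ∫ u in (0:ℝ)..1, C v u) (𝓝[>] (0:ℝ)) (𝓝 1) ∧
    Filter.Tendsto (fun v => 1 - (1/v) * ∫ u in (0:ℝ)..1, C u v) (𝓝[>] (0:ℝ)) (𝓝 0) ∧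
    Filter.Tendsto (fun v => 1 - (1/v) * ∫ u in (0:ℝ)..1, C v u) (𝓝[>] (0:ℝ)) (𝓝 0) ∧
    Filter.Tendsto (fun v =>
        (1 - (1/v) * ∫ u in (0:ℝ)..1, C u v) - (1 - (1/v) * ∫ u in (0:ℝ)..1, C v u))
      (𝓝[>] (0:ℝ)) (𝓝 0) := by
  have h1 := copula_tendsto_aux C hC htdc
  have h2 := copula_tendsto_aux (fun a b => C b a) (copula_swap hC) htdc
  have h3 : Filter.Tendsto (fun v => 1 - (1/v) * ∫ u in (0:ℝ)..1, C u v)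
      (𝓝[>] (0:ℝ)) (𝓝 0) := by
    simpa using (tendsto_const_nhds (x := (1:ℝ))).sub h1
  have h4 : Filter.Tendsto (fun v => 1 - (1/v) * ∫ u in (0:ℝ)..1, C v u)
      (𝓝[>] (0:ℝ)) (𝓝 0) := by
    simpa using (tendsto_const_nhds (x := (1:ℝ))).sub h2
  exact ⟨h1, h2, h3, h4, by simpa using h3.sub h4⟩
end

section
/- Let (X₁,Y₁), (X₂,Y₂), … be an i.i.d. sequence of pairs of real-valued random variables whose marginal distribution functions F_X and F_Y are continuous, with copula C (so P(X₁ ≤ x, Y₁ ≤ y) = C(F_X(x), F_Y(y)) for all x, y). Then for every fixed v ∈ (0,1], the estimator χ̂ₙ^{Y→X}(v) = 1 − (1/v) ∫₀¹ Ĉₙ(u,v) du converges almost surely, as n → ∞, to χ^{Y→X}_C(v) = 1 − (1/v) ∫₀¹ C(u,v) du. -/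
open MeasureTheory ProbabilityTheory Filter Set Topology

/-- Empirical distribution function of the sample `Z 0 ω, …, Z (n-1) ω`. -/
noncomputable def empCDF {Ω : Type*} (Z : ℕ → Ω → ℝ) (n : ℕ) (ω : Ω) (x : ℝ) : ℝ :=
  (n : ℝ)⁻¹ * ∑ i ∈ Finset.range n, if Z i ω ≤ x then (1:ℝ) else 0

/-- Empirical copula of the sample `(X 0 ω, Y 0 ω), …, (X (n-1) ω, Y (n-1) ω)`. -/
noncomputable def empCopula {Ω : Type*} (X Y : ℕ → Ω → ℝ) (n : ℕ) (ω : Ω) (u v : ℝ) : ℝ :=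
  (n : ℝ)⁻¹ * ∑ i ∈ Finset.range n,
    (if empCDF X n ω (X i ω) ≤ u then (1:ℝ) else 0) *
    (if empCDF Y n ω (Y i ω) ≤ v then (1:ℝ) else 0)

/-!
Almost surely the two samples have no ties, because the margins are continuous. Then the rank
of `Xᵢ` among `X₁, …, Xₙ` determines `F̂_{X,n}(Xᵢ)`, so exactly `⌊n u⌋` indices satisfy
`F̂_{X,n}(Xᵢ) ≤ u`; moreover `{i : F̂_{X,n}(Xᵢ) ≤ u}` and `{i : F_X(Xᵢ) ≤ u}` are nested, so
`Ĉₙ(u, v)` differs from the frequency of `{F_X(Xᵢ) ≤ u, F_Y(Yᵢ) ≤ v}` by at most the gaps between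
the marginal frequencies. By the strong law and the probability integral transform these
frequencies tend to `u`, `v` and `C(u, v)`, simultaneously for all rational `u`. Monotonicity of
`Ĉₙ(·, v)` and continuity of `C(·, v)` extend the convergence to every `u ∈ (0, 1]`, and dominated
convergence passes it to the integral.
-/

open scoped Finset

noncomputable def freq (p : ℕ → Prop) [DecidablePred p] (n : ℕ) : ℝ :=
  (n : ℝ)⁻¹ * ∑ i ∈ Finset.range n, if p i then (1 : ℝ) else 0

section Freq

variable {p q p' q' : ℕ → Prop} [DecidablePred p] [DecidablePred q] [DecidablePred p']
  [DecidablePred q']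

lemma freq_eq_card (n : ℕ) :
    freq p n = (n : ℝ)⁻¹ * #{i ∈ Finset.range n | p i} := by
  rw [freq, Finset.sum_boole]

lemma freq_mono (h : p ≤ q) (n : ℕ) : freq p n ≤ freq q n := by
  rw [freq_eq_card, freq_eq_card]
  gcongr
  exact h _

lemma freq_nonneg (n : ℕ) : 0 ≤ freq p n := by
  rw [freq_eq_card]; positivity

lemma freq_le_one (n : ℕ) : freq p n ≤ 1 := by
  rw [freq_eq_card]
  rcases n.eq_zero_or_pos with rfl | hn
  · simp
  rw [inv_mul_le_one₀ (by positivity)]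
  exact_mod_cast (Finset.card_filter_le _ _).trans (Finset.card_range n).le

lemma sum_abs_ite_sub_ite_of_total (s : Finset ℕ) (h : p ≤ p' ∨ p' ≤ p) :
    ∑ i ∈ s, |(if p i then (1 : ℝ) else 0) - if p' i then 1 else 0| =
      |∑ i ∈ s, (if p i then (1 : ℝ) else 0) - ∑ i ∈ s, if p' i then (1 : ℝ) else 0| := by
  rw [← Finset.sum_sub_distrib]
  rcases h with h | h
  · have hd (i : ℕ) : (if p i then (1 : ℝ) else 0) - (if p' i then 1 else 0) ≤ 0 := by
      by_cases hi : p i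
      · simp [hi, h i hi]
      · split_ifs <;> norm_num
    rw [abs_of_nonpos (Finset.sum_nonpos fun i _ => hd i), ← Finset.sum_neg_distrib]
    exact Finset.sum_congr rfl fun i _ => abs_of_nonpos (hd i)
  · have hd (i : ℕ) : 0 ≤ (if p i then (1 : ℝ) else 0) - (if p' i then 1 else 0) := by
      by_cases hi : p' i
      · simp [hi, h i hi]
      · split_ifs <;> norm_num
    rw [abs_of_nonneg (Finset.sum_nonneg fun i _ => hd i)]
    exact Finset.sum_congr rfl fun i _ => abs_of_nonneg (hd i)

lemma abs_freq_and_sub_freq_and_le (hp : p ≤ p' ∨ p' ≤ p) (hq : q ≤ q' ∨ q' ≤ q) (n : ℕ) :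
    |freq (fun i => p i ∧ q i) n - freq (fun i => p' i ∧ q' i) n| ≤
      |freq p n - freq p' n| + |freq q n - freq q' n| := by
  simp only [freq, ← mul_sub, abs_mul, abs_inv, Nat.abs_cast, ← mul_add]
  gcongr
  rw [← sum_abs_ite_sub_ite_of_total _ hp, ← sum_abs_ite_sub_ite_of_total _ hq,
    ← Finset.sum_add_distrib, ← Finset.sum_sub_distrib]
  refine (Finset.abs_sum_le_sum_abs _ _).trans (Finset.sum_le_sum fun i _ => ?_)
  split_ifs <;> simp_all

end Freq

lemma tendsto_freq_and_of_total {P Q : ℕ → ℕ → Prop} [∀ n, DecidablePred (P n)]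
    [∀ n, DecidablePred (Q n)] {p q : ℕ → Prop} [DecidablePred p] [DecidablePred q] {a b c : ℝ}
    (hPp : ∀ n, P n ≤ p ∨ p ≤ P n) (hQq : ∀ n, Q n ≤ q ∨ q ≤ Q n)
    (hP : Tendsto (fun n => freq (P n) n) atTop (𝓝 a)) (hp : Tendsto (freq p) atTop (𝓝 a))
    (hQ : Tendsto (fun n => freq (Q n) n) atTop (𝓝 b)) (hq : Tendsto (freq q) atTop (𝓝 b))
    (hpq : Tendsto (freq fun i => p i ∧ q i) atTop (𝓝 c)) :
    Tendsto (fun n => freq (fun i => P n i ∧ Q n i) n) atTop (𝓝 c) := by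
  have hdiff : Tendsto (fun n => |freq (P n) n - freq p n| + |freq (Q n) n - freq q n|)
      atTop (𝓝 0) := by
    simpa using ((hP.sub hp).abs.add (hQ.sub hq).abs)
  have hclose := squeeze_zero (fun n => abs_nonneg _)
    (fun n => abs_freq_and_sub_freq_and_le (hPp n) (hQq n) n) hdiff
  simpa using (tendsto_zero_iff_abs_tendsto_zero _).2 hclose |>.add hpq

lemma le_or_le_of_monotone {ι α β : Type*} [LinearOrder α] [Preorder β] {φ ψ : α → β}
    (hφ : Monotone φ) (hψ : Monotone ψ) (z : ι → α) (u : β) :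
    (fun i => φ (z i) ≤ u) ≤ (fun i => ψ (z i) ≤ u) ∨
      (fun i => ψ (z i) ≤ u) ≤ (fun i => φ (z i) ≤ u) :=
  ((isLowerSet_Iic u).preimage hφ).total ((isLowerSet_Iic u).preimage hψ) |>.imp
    (fun h _ hi => h hi) (fun h _ hi => h hi)

lemma card_filter_card_filter_le_le {α : Type*} [LinearOrder α] {z : ℕ → α} {n : ℕ}
    (hz : InjOn z (Finset.range n)) (m : ℕ) :
    #{i ∈ Finset.range n | #{j ∈ Finset.range n | z j ≤ z i} ≤ m} = min m n := by
  set r : ℕ → ℕ := fun i => #{j ∈ Finset.range n | z j ≤ z i}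
  have hr_lt {i j : ℕ} (hj : j ∈ Finset.range n) (hij : z i < z j) : r i < r j :=
    Finset.card_lt_card <| (Finset.ssubset_iff_of_subset
      (Finset.monotone_filter_right _ fun k _ hk => hk.trans hij.le)).2
      ⟨j, Finset.mem_filter.2 ⟨hj, le_rfl⟩, fun h => (Finset.mem_filter.1 h).2.not_gt hij⟩
  have hr_inj : InjOn r (Finset.range n) := fun i hi j hj hrij => by
    rcases lt_trichotomy (z i) (z j) with h | h | h
    · exact absurd hrij (hr_lt hj h).ne
    · exact hz hi hj h
    · exact absurd hrij (hr_lt hi h).ne'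
  have hr_mem (i : ℕ) (hi : i ∈ Finset.range n) : r i ∈ Finset.Icc 1 n :=
    Finset.mem_Icc.2 ⟨Finset.card_pos.2 ⟨i, Finset.mem_filter.2 ⟨hi, le_rfl⟩⟩,
      (Finset.card_filter_le _ _).trans (Finset.card_range n).le⟩
  have himage : (Finset.range n).image r = Finset.Icc 1 n :=
    Finset.eq_of_subset_of_card_le (Finset.image_subset_iff.2 hr_mem)
      (by rw [Finset.card_image_of_injOn hr_inj]; simp)
  calc #{i ∈ Finset.range n | r i ≤ m} = #{k ∈ Finset.Icc 1 n | k ≤ m} := by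
        rw [← himage, Finset.filter_image, Finset.card_image_of_injOn
          (hr_inj.mono (Finset.coe_subset.2 (Finset.filter_subset _ _)))]
    _ = min m n := by
        rw [show {k ∈ Finset.Icc 1 n | k ≤ m} = Finset.Icc 1 (min m n) by ext; simp; omega]
        simp

section Empirical

variable {Ω : Type*}

lemma empCDF_eq_freq (Z : ℕ → Ω → ℝ) (n : ℕ) (ω : Ω) (x : ℝ) :
    empCDF Z n ω x = freq (fun i => Z i ω ≤ x) n := rfl

lemma empCDF_mono (Z : ℕ → Ω → ℝ) (n : ℕ) (ω : Ω) : Monotone (empCDF Z n ω) :=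
  fun _ _ hxy => freq_mono (fun _ hi => hi.trans hxy) n

lemma empCopula_eq_freq (X Y : ℕ → Ω → ℝ) (n : ℕ) (ω : Ω) (u v : ℝ) :
    empCopula X Y n ω u v =
      freq (fun i => empCDF X n ω (X i ω) ≤ u ∧ empCDF Y n ω (Y i ω) ≤ v) n := by
  simp only [empCopula, freq, ite_zero_mul_ite_zero, mul_one]

lemma empCopula_mono_left (X Y : ℕ → Ω → ℝ) (n : ℕ) (ω : Ω) (v : ℝ) :
    Monotone fun u => empCopula X Y n ω u v := fun _ _ huu' => by
  simp only [empCopula_eq_freq]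
  exact freq_mono (fun _ hi => ⟨hi.1.trans huu', hi.2⟩) n

lemma abs_empCopula_le_one (X Y : ℕ → Ω → ℝ) (n : ℕ) (ω : Ω) (u v : ℝ) :
    |empCopula X Y n ω u v| ≤ 1 := by
  rw [empCopula_eq_freq, abs_of_nonneg (freq_nonneg n)]
  exact freq_le_one n

variable {Z : ℕ → Ω → ℝ} {ω : Ω} {u : ℝ}

/-- Without ties, `n * empCDF Z n ω (Z i ω)` is the rank of `Z i ω`, and the ranks are
`1, …, n`. -/
lemma freq_empCDF_le (hZ : Function.Injective (Z · ω)) (hu : u ∈ Icc 0 1) (n : ℕ) :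
    freq (fun i => empCDF Z n ω (Z i ω) ≤ u) n = (n : ℝ)⁻¹ * ⌊n * u⌋₊ := by
  rcases n.eq_zero_or_pos with rfl | hn
  · simp [freq]
  have hrank (i : ℕ) :
      empCDF Z n ω (Z i ω) ≤ u ↔ #{j ∈ Finset.range n | Z j ω ≤ Z i ω} ≤ ⌊n * u⌋₊ := by
    rw [empCDF_eq_freq, freq_eq_card, Nat.le_floor_iff (mul_nonneg n.cast_nonneg hu.1),
      inv_mul_le_iff₀ (by positivity)]
  rw [freq_eq_card, Finset.filter_congr fun i _ => hrank i,
    card_filter_card_filter_le_le hZ.injOn,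
    min_eq_left (Nat.floor_le_of_le (by nlinarith [hu.2]))]

lemma tendsto_freq_empCDF_le (hZ : Function.Injective (Z · ω)) (hu : u ∈ Icc 0 1) :
    Tendsto (fun n => freq (fun i => empCDF Z n ω (Z i ω) ≤ u) n) atTop (𝓝 u) := by
  simp_rw [freq_empCDF_le hZ hu]
  refine ((tendsto_nat_floor_mul_div_atTop hu.1).comp tendsto_natCast_atTop_atTop).congr
    fun n => ?_
  simp [div_eq_inv_mul, mul_comm]

/-- The events `empCDF X n ω (X i ω) ≤ u` and `F (X i ω) ≤ u` are both initial segments of the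
sample in the order of `X`, hence nested, and likewise for `Y`. -/
lemma tendsto_empCopula_of_tendsto_freq {X Y : ℕ → Ω → ℝ} {F G : ℝ → ℝ} (hF : Monotone F)
    (hG : Monotone G) (hX : Function.Injective (X · ω)) (hY : Function.Injective (Y · ω))
    {v c : ℝ} (hu : u ∈ Icc 0 1) (hv : v ∈ Icc 0 1)
    (hXu : Tendsto (freq fun i => F (X i ω) ≤ u) atTop (𝓝 u))
    (hYv : Tendsto (freq fun i => G (Y i ω) ≤ v) atTop (𝓝 v))
    (hXY : Tendsto (freq fun i => F (X i ω) ≤ u ∧ G (Y i ω) ≤ v) atTop (𝓝 c)) :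
    Tendsto (fun n => empCopula X Y n ω u v) atTop (𝓝 c) := by
  simp only [empCopula_eq_freq]
  exact tendsto_freq_and_of_total
    (fun n => le_or_le_of_monotone (empCDF_mono X n ω) hF _ _)
    (fun n => le_or_le_of_monotone (empCDF_mono Y n ω) hG _ _)
    (tendsto_freq_empCDF_le hX hu) hXu (tendsto_freq_empCDF_le hY hv) hYv hXY

end Empirical

namespace IsCopula

variable {C : ℝ → ℝ → ℝ} {u₁ u₂ v : ℝ}

lemma map_one_left (hC : IsCopula C) (hv : v ∈ Icc 0 1) : C 1 v = v := (hC.1 v hv).2.2.2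

lemma map_one_right (hC : IsCopula C) (hu : u₁ ∈ Icc 0 1) : C u₁ 1 = u₁ := (hC.1 u₁ hu).2.2.1

lemma abs_sub_le_left (hC : IsCopula C) (hv : v ∈ Icc 0 1) (hu₁ : u₁ ∈ Icc 0 1)
    (hu₂ : u₂ ∈ Icc 0 1) : |C u₂ v - C u₁ v| ≤ |u₂ - u₁| := by
  wlog h : u₁ ≤ u₂ generalizing u₁ u₂
  · rw [abs_sub_comm, abs_sub_comm u₂]
    exact this hu₂ hu₁ (le_of_not_ge h)
  have hlow := hC.2.2 u₁ u₂ 0 v hu₁.1 h hu₂.2 le_rfl hv.1 hv.2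
  have hup := hC.2.2 u₁ u₂ v 1 hu₁.1 h hu₂.2 hv.1 hv.2 le_rfl
  rw [(hC.1 u₁ hu₁).1, (hC.1 u₂ hu₂).1] at hlow
  rw [hC.map_one_right hu₁, hC.map_one_right hu₂] at hup
  rw [abs_of_nonneg (by linarith), abs_of_nonneg (by linarith)]
  linarith

lemma continuousOn_left (hC : IsCopula C) (hv : v ∈ Icc 0 1) :
    ContinuousOn (fun u => C u v) (Icc 0 1) :=
  (LipschitzOnWith.of_dist_le_mul (K := 1) fun _ hx _ hy => by
    simpa [Real.dist_eq] using hC.abs_sub_le_left hv hy hx).continuousOn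

end IsCopula

lemma tendsto_apply_of_monotone_of_mem_closure {ι : Type*} {l : Filter ι} {f : ι → ℝ → ℝ}
    {g : ℝ → ℝ} {s : Set ℝ} {x : ℝ} (hf : ∀ i, Monotone (f i)) (hg : ContinuousWithinAt g s x)
    (hlo : x ∈ closure (s ∩ Iic x)) (hhi : x ∈ closure (s ∩ Ici x))
    (hs : ∀ y ∈ s, Tendsto (f · y) l (𝓝 (g y))) : Tendsto (f · x) l (𝓝 (g x)) := by
  refine tendsto_order.2 ⟨fun a ha => ?_, fun b hb => ?_⟩
  · have := mem_closure_iff_nhdsWithin_neBot.1 hlo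
    obtain ⟨y, hgy, hys, hyx⟩ := (((hg.mono (inter_subset_left (t := Iic x))).eventually
      (lt_mem_nhds ha)).and self_mem_nhdsWithin).exists
    filter_upwards [(hs y hys).eventually (lt_mem_nhds hgy)] with i hi
    exact hi.trans_le (hf i hyx)
  · have := mem_closure_iff_nhdsWithin_neBot.1 hhi
    obtain ⟨y, hgy, hys, hxy⟩ := (((hg.mono (inter_subset_left (t := Ici x))).eventually
      (gt_mem_nhds hb)).and self_mem_nhdsWithin).exists
    filter_upwards [(hs y hys).eventually (gt_mem_nhds hgy)] with i hi
    exact (hf i hxy).trans_lt hi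

lemma Icc_subset_closure_Ioo_inter_range_ratCast {a b : ℝ} (hab : a < b) :
    Icc a b ⊆ closure (Ioo a b ∩ range ((↑) : ℚ → ℝ)) := by
  rw [← closure_Ioo hab.ne]
  exact closure_minimal (Rat.denseRange_cast.open_subset_closure_inter isOpen_Ioo)
    isClosed_closure

lemma tendsto_intervalIntegral_of_monotone_of_tendsto_ratCast {f : ℕ → ℝ → ℝ} {g : ℝ → ℝ}
    {B : ℝ} (hf : ∀ n, Monotone (f n)) (hB : ∀ n u, |f n u| ≤ B) (hg : ContinuousOn g (Ioc 0 1))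
    (hq : ∀ q : ℚ, (q : ℝ) ∈ Ioc 0 1 → Tendsto (f · q) atTop (𝓝 (g q))) :
    Tendsto (fun n => ∫ u in (0 : ℝ)..1, f n u) atTop (𝓝 (∫ u in (0 : ℝ)..1, g u)) := by
  set s : Set ℝ := Ioc 0 1 ∩ range ((↑) : ℚ → ℝ)
  refine intervalIntegral.tendsto_integral_filter_of_dominated_convergence (fun _ => B)
    (.of_forall fun n => (hf n).measurable.aestronglyMeasurable)
    (.of_forall fun n => .of_forall fun u _ => hB n u) intervalIntegrable_const
    (.of_forall fun x hx => ?_)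
  rw [uIoc_of_le zero_le_one] at hx
  have hlo : x ∈ closure (s ∩ Iic x) := by
    refine closure_mono ?_ (Icc_subset_closure_Ioo_inter_range_ratCast hx.1 ⟨hx.1.le, le_rfl⟩)
    exact fun y ⟨hy, hyq⟩ => ⟨⟨⟨hy.1, hy.2.le.trans hx.2⟩, hyq⟩, hy.2.le⟩
  have hhi : x ∈ closure (s ∩ Ici x) := by
    rcases hx.2.eq_or_lt with rfl | hx1
    · exact subset_closure ⟨⟨hx, 1, Rat.cast_one⟩, mem_Ici.2 le_rfl⟩
    · refine closure_mono ?_ (Icc_subset_closure_Ioo_inter_range_ratCast hx1 ⟨le_rfl, hx1.le⟩)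
      exact fun y ⟨hy, hyq⟩ => ⟨⟨⟨hx.1.trans hy.1, hy.2.le⟩, hyq⟩, hy.1.le⟩
  refine tendsto_apply_of_monotone_of_mem_closure hf
    ((hg x hx).mono inter_subset_left) hlo hhi ?_
  rintro _ ⟨hy, q, rfl⟩
  exact hq q hy

lemma exists_eq_and_le_iff_of_monotone_of_continuous {F : ℝ → ℝ} (hm : Monotone F)
    (hc : Continuous F) {u : ℝ} (ha : ∃ a, F a ≤ u) (hb : ∃ b, u < F b) :
    ∃ p, F p = u ∧ ∀ x, F x ≤ u ↔ x ≤ p := by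
  obtain ⟨a, ha⟩ := ha
  obtain ⟨b, hb⟩ := hb
  set S := {x | F x ≤ u}
  have hbdd : BddAbove S := ⟨b, fun x hx => (hm.reflect_lt (hx.trans_lt hb)).le⟩
  have hpS : sSup S ∈ S := (isClosed_le hc continuous_const).csSup_mem ⟨a, ha⟩ hbdd
  obtain ⟨c, hc, hFc⟩ := intermediate_value_Icc (hm.reflect_lt (hpS.trans_lt hb)).le
    hc.continuousOn ⟨hpS, hb.le⟩
  have hcp : c = sSup S := le_antisymm (le_csSup hbdd hFc.le) hc.1
  exact ⟨sSup S, hcp ▸ hFc, fun x => ⟨fun hx => le_csSup hbdd hx, fun hx => (hm hx).trans hpS⟩⟩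

namespace ProbabilityTheory

variable (ν : Measure ℝ)

lemma nullSingletonClass_of_continuous_cdf [IsProbabilityMeasure ν] (hc : Continuous (cdf ν)) :
    NullSingletonClass ν where
  measure_singleton x := by
    rw [← measure_cdf ν, StieltjesFunction.measure_singleton,
      hc.continuousWithinAt.leftLim_eq, sub_self, ENNReal.ofReal_zero]

lemma exists_cdf_eq_and_cdf_le_iff (hc : Continuous (cdf ν)) {u : ℝ} (hu0 : 0 < u) (hu1 : u < 1) :
    ∃ p, cdf ν p = u ∧ ∀ x, cdf ν x ≤ u ↔ x ≤ p :=
  exists_eq_and_le_iff_of_monotone_of_continuous (monotone_cdf ν) hc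
    ((tendsto_cdf_atBot ν).eventually (ge_mem_nhds hu0)).exists
    ((tendsto_cdf_atTop ν).eventually (lt_mem_nhds hu1)).exists

variable {Ω : Type*} [MeasurableSpace Ω] {μ : Measure Ω} [IsProbabilityMeasure μ] {X Y : Ω → ℝ}

lemma measureReal_le_eq_cdf_map (hX : AEMeasurable X μ) (x : ℝ) :
    μ.real {ω | X ω ≤ x} = cdf (μ.map X) x := by
  have := Measure.isProbabilityMeasure_map hX
  rw [cdf_eq_real, map_measureReal_apply_of_aemeasurable hX measurableSet_Iic]
  rfl

lemma measureReal_cdf_map_le (hX : AEMeasurable X μ) (hc : Continuous (cdf (μ.map X))) {u : ℝ}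
    (hu : u ∈ Ioc 0 1) : μ.real {ω | cdf (μ.map X) (X ω) ≤ u} = u := by
  have := Measure.isProbabilityMeasure_map hX
  rcases hu.2.eq_or_lt with rfl | hu1
  · simp [cdf_le_one]
  obtain ⟨p, hp, hle⟩ := exists_cdf_eq_and_cdf_le_iff _ hc hu.1 hu1
  simp only [hle, measureReal_le_eq_cdf_map hX, hp]

lemma measureReal_cdf_map_le_and_cdf_map_le (hX : AEMeasurable X μ) (hY : AEMeasurable Y μ)
    (hcX : Continuous (cdf (μ.map X))) (hcY : Continuous (cdf (μ.map Y))) {C : ℝ → ℝ → ℝ}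
    (hC : IsCopula C)
    (hlink : ∀ x y, μ.real {ω | X ω ≤ x ∧ Y ω ≤ y} = C (cdf (μ.map X) x) (cdf (μ.map Y) y))
    {u v : ℝ} (hu : u ∈ Ioc 0 1) (hv : v ∈ Ioc 0 1) :
    μ.real {ω | cdf (μ.map X) (X ω) ≤ u ∧ cdf (μ.map Y) (Y ω) ≤ v} = C u v := by
  have := Measure.isProbabilityMeasure_map hX
  have := Measure.isProbabilityMeasure_map hY
  rcases hu.2.eq_or_lt with rfl | hu1
  · simp only [cdf_le_one, true_and]
    rw [measureReal_cdf_map_le hY hcY hv, hC.map_one_left (Ioc_subset_Icc_self hv)]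
  rcases hv.2.eq_or_lt with rfl | hv1
  · simp only [cdf_le_one, and_true]
    rw [measureReal_cdf_map_le hX hcX hu, hC.map_one_right (Ioc_subset_Icc_self hu)]
  obtain ⟨p, hp, hpX⟩ := exists_cdf_eq_and_cdf_le_iff _ hcX hu.1 hu1
  obtain ⟨q, hq, hqY⟩ := exists_cdf_eq_and_cdf_le_iff _ hcY hv.1 hv1
  simp only [hpX, hqY, hlink, hp, hq]

end ProbabilityTheory

section Sample

variable {Ω E : Type*} [MeasurableSpace Ω] [MeasurableSpace E] {μ : Measure Ω}

lemma ProbabilityTheory.IndepFun.ae_ne [IsFiniteMeasure μ] [MeasurableEq E] {W₁ W₂ : Ω → E}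
    (h : IndepFun W₁ W₂ μ) (h₁ : AEMeasurable W₁ μ) (h₂ : AEMeasurable W₂ μ)
    [NullSingletonClass (μ.map W₂)] : ∀ᵐ ω ∂μ, W₁ ω ≠ W₂ ω := by
  have hdiag : {ω | ¬W₁ ω ≠ W₂ ω} = (fun ω => (W₁ ω, W₂ ω)) ⁻¹' diagonal E := by
    ext; simp
  rw [ae_iff, hdiag, ← Measure.map_apply_of_aemeasurable (h₁.prodMk h₂) measurableSet_diagonal,
    (indepFun_iff_map_prod_eq_prod_map_map h₁ h₂).1 h, Measure.prod_apply measurableSet_diagonal]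
  have hslice (x : E) : Prod.mk x ⁻¹' diagonal E = {x} := by
    ext; simp [eq_comm]
  simp [hslice]

lemma ae_tendsto_freq [IsFiniteMeasure μ] {Z : ℕ → Ω → E}
    (hind : Pairwise fun i j => IndepFun (Z i) (Z j) μ)
    (hident : ∀ i, IdentDistrib (Z i) (Z 0) μ μ) {P : E → Prop} [DecidablePred P]
    (hP : MeasurableSet {x | P x}) :
    ∀ᵐ ω ∂μ, Tendsto (freq fun i => P (Z i ω)) atTop (𝓝 (μ.real {ω | P (Z 0 ω)})) := by
  set g : E → ℝ := {x | P x}.indicator 1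
  have hg : Measurable g := measurable_one.indicator hP
  have hZ0 := (hident 0).aemeasurable_fst
  have hint : Integrable (fun ω => g (Z 0 ω)) μ :=
    (integrable_const 1).mono' (hg.comp_aemeasurable hZ0).aestronglyMeasurable
      (.of_forall fun ω => by simp only [g, indicator_apply]; split_ifs <;> simp)
  have hmean : μ[fun ω => g (Z 0 ω)] = μ.real {ω | P (Z 0 ω)} := by
    rw [← integral_map hZ0 hg.aestronglyMeasurable, integral_indicator_one hP,
      map_measureReal_apply_of_aemeasurable hZ0 hP]
    rfl
  filter_upwards [strong_law_ae_real (fun i ω => g (Z i ω)) hint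
    (fun i j hij => (hind hij).comp hg hg) fun i => (hident i).comp hg] with ω hω
  rw [hmean] at hω
  refine hω.congr fun n => ?_
  simp [freq, g, indicator_apply, div_eq_inv_mul]

variable [IsProbabilityMeasure μ]

lemma ae_injective_of_continuous_cdf {W : ℕ → Ω → ℝ}
    (hind : Pairwise fun i j => IndepFun (W i) (W j) μ)
    (hident : ∀ i, IdentDistrib (W i) (W 0) μ μ) (hc : Continuous (cdf (μ.map (W 0)))) :
    ∀ᵐ ω ∂μ, Function.Injective (W · ω) := by
  have := Measure.isProbabilityMeasure_map (hident 0).aemeasurable_fst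
  have hne (i j : ℕ) : ∀ᵐ ω ∂μ, i ≠ j → W i ω ≠ W j ω :=
    eventually_imp_distrib_left.2 fun hij => by
      have : NullSingletonClass (μ.map (W j)) := by
        rw [(hident j).map_eq]; exact nullSingletonClass_of_continuous_cdf _ hc
      exact (hind hij).ae_ne (hident i).aemeasurable_fst (hident j).aemeasurable_fst
  filter_upwards [ae_all_iff.2 fun i => ae_all_iff.2 (hne i)] with ω hω i j hij
  exact by_contra fun h => hω i j h hij

lemma ae_tendsto_freq_cdf_map_le {W : ℕ → Ω → ℝ}
    (hind : Pairwise fun i j => IndepFun (W i) (W j) μ)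
    (hident : ∀ i, IdentDistrib (W i) (W 0) μ μ) (hc : Continuous (cdf (μ.map (W 0)))) {u : ℝ}
    (hu : u ∈ Ioc 0 1) :
    ∀ᵐ ω ∂μ, Tendsto (freq fun i => cdf (μ.map (W 0)) (W i ω) ≤ u) atTop (𝓝 u) := by
  have h := ae_tendsto_freq hind hident (P := fun x => cdf (μ.map (W 0)) x ≤ u)
    (measurableSet_le hc.measurable measurable_const)
  rwa [measureReal_cdf_map_le (hident 0).aemeasurable_fst hc hu] at h

lemma ae_tendsto_freq_cdf_map_le_and_cdf_map_le {X Y : ℕ → Ω → ℝ}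
    (hind : Pairwise fun i j =>
      IndepFun (fun ω => (X i ω, Y i ω)) (fun ω => (X j ω, Y j ω)) μ)
    (hident : ∀ i, IdentDistrib (fun ω => (X i ω, Y i ω)) (fun ω => (X 0 ω, Y 0 ω)) μ μ)
    (hcX : Continuous (cdf (μ.map (X 0)))) (hcY : Continuous (cdf (μ.map (Y 0))))
    {C : ℝ → ℝ → ℝ} (hC : IsCopula C)
    (hlink : ∀ x y, μ.real {ω | X 0 ω ≤ x ∧ Y 0 ω ≤ y} =
      C (cdf (μ.map (X 0)) x) (cdf (μ.map (Y 0)) y))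
    {u v : ℝ} (hu : u ∈ Ioc 0 1) (hv : v ∈ Ioc 0 1) :
    ∀ᵐ ω ∂μ, Tendsto (freq fun i => cdf (μ.map (X 0)) (X i ω) ≤ u ∧
      cdf (μ.map (Y 0)) (Y i ω) ≤ v) atTop (𝓝 (C u v)) := by
  have h := ae_tendsto_freq hind hident
    (P := fun p => cdf (μ.map (X 0)) p.1 ≤ u ∧ cdf (μ.map (Y 0)) p.2 ≤ v)
    ((measurableSet_le (hcX.measurable.comp measurable_fst) measurable_const).inter
      (measurableSet_le (hcY.measurable.comp measurable_snd) measurable_const))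
  rwa [measureReal_cdf_map_le_and_cdf_map_le (hident 0).aemeasurable_fst.fst
    (hident 0).aemeasurable_fst.snd hcX hcY hC hlink hu hv] at h

end Sample

theorem tcte_estimator_strong_consistency_fixed_v_general
    {Ω : Type*} [MeasurableSpace Ω] (μ : Measure Ω) [IsProbabilityMeasure μ]
    (X Y : ℕ → Ω → ℝ)
    (hindep : iIndepFun (fun i ω => (X i ω, Y i ω)) μ)
    (hident : ∀ i, IdentDistrib (fun ω => (X i ω, Y i ω)) (fun ω => (X 0 ω, Y 0 ω)) μ μ)
    (Fx Fy : ℝ → ℝ)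
    (hFx : ∀ x, Fx x = (μ {ω | X 0 ω ≤ x}).toReal)
    (hFy : ∀ y, Fy y = (μ {ω | Y 0 ω ≤ y}).toReal)
    (hFxc : Continuous Fx) (hFyc : Continuous Fy)
    (C : ℝ → ℝ → ℝ) (hC : IsCopula C)
    (hlink : ∀ x y, (μ {ω | X 0 ω ≤ x ∧ Y 0 ω ≤ y}).toReal = C (Fx x) (Fy y))
    (v : ℝ) (hv : v ∈ Set.Ioc (0:ℝ) 1) :
    ∀ᵐ ω ∂μ, Filter.Tendsto
      (fun n => 1 - (1/v) * ∫ u in (0:ℝ)..1, empCopula X Y n ω u v)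
      Filter.atTop (𝓝 (1 - (1/v) * ∫ u in (0:ℝ)..1, C u v)) := by
  obtain rfl : Fx = cdf (μ.map (X 0)) := funext fun x =>
    (hFx x).trans (measureReal_le_eq_cdf_map (hident 0).aemeasurable_fst.fst x)
  obtain rfl : Fy = cdf (μ.map (Y 0)) := funext fun y =>
    (hFy y).trans (measureReal_le_eq_cdf_map (hident 0).aemeasurable_fst.snd y)
  have hXY : Pairwise fun i j =>
      IndepFun (fun ω => (X i ω, Y i ω)) (fun ω => (X j ω, Y j ω)) μ :=
    fun i j hij => hindep.indepFun hij
  have hXind : Pairwise fun i j => IndepFun (X i) (X j) μ :=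
    fun i j hij => (hXY hij).comp measurable_fst measurable_fst
  have hYind : Pairwise fun i j => IndepFun (Y i) (Y j) μ :=
    fun i j hij => (hXY hij).comp measurable_snd measurable_snd
  have hXident (i : ℕ) : IdentDistrib (X i) (X 0) μ μ := (hident i).comp measurable_fst
  have hYident (i : ℕ) : IdentDistrib (Y i) (Y 0) μ μ := (hident i).comp measurable_snd
  have hv' := Ioc_subset_Icc_self hv
  filter_upwards [ae_injective_of_continuous_cdf hXind hXident hFxc,
    ae_injective_of_continuous_cdf hYind hYident hFyc,
    ae_tendsto_freq_cdf_map_le hYind hYident hFyc hv,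
    ae_all_iff.2 fun q : ℚ => eventually_imp_distrib_left.2 fun hq =>
      (ae_tendsto_freq_cdf_map_le hXind hXident hFxc hq).and
        (ae_tendsto_freq_cdf_map_le_and_cdf_map_le hXY hident hFxc hFyc hC hlink hq hv)]
    with ω hXω hYω hYv hXq
  have hCv := (hC.continuousOn_left hv').mono Ioc_subset_Icc_self
  refine ((tendsto_intervalIntegral_of_monotone_of_tendsto_ratCast (empCopula_mono_left X Y · ω v)
    (abs_empCopula_le_one X Y · ω · v) hCv fun q hq => ?_).const_mul (1 / v)).const_sub 1
  exact tendsto_empCopula_of_tendsto_freq (monotone_cdf _) (monotone_cdf _) hXω hYω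
    (Ioc_subset_Icc_self hq) hv' (hXq q hq).1 hYv (hXq q hq).2

/-- Theorem 3.1, first part. For an i.i.d. sample from a joint
distribution with continuous margins and copula `C`, and any fixed `v ∈ (0,1]`, the
estimator `χ̂ₙ^{Y→X}(v) = 1 − (1/v)∫₀¹ Ĉₙ(u,v) du` converges almost surely to
`χ^{Y→X}_C(v) = 1 − (1/v)∫₀¹ C(u,v) du`. -/
theorem tcte_estimator_strong_consistency_fixed_v
    {Ω : Type*} [MeasurableSpace Ω] (μ : Measure Ω) [IsProbabilityMeasure μ]
    (X Y : ℕ → Ω → ℝ)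
    (hmeas : ∀ i, Measurable (fun ω => (X i ω, Y i ω)))
    (hindep : iIndepFun (fun i ω => (X i ω, Y i ω)) μ)
    (hident : ∀ i, IdentDistrib (fun ω => (X i ω, Y i ω)) (fun ω => (X 0 ω, Y 0 ω)) μ μ)
    (Fx Fy : ℝ → ℝ)
    (hFx : ∀ x, Fx x = (μ {ω | X 0 ω ≤ x}).toReal)
    (hFy : ∀ y, Fy y = (μ {ω | Y 0 ω ≤ y}).toReal)
    (hFxc : Continuous Fx) (hFyc : Continuous Fy)
    (C : ℝ → ℝ → ℝ) (hC : IsCopula C)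
    (hlink : ∀ x y, (μ {ω | X 0 ω ≤ x ∧ Y 0 ω ≤ y}).toReal = C (Fx x) (Fy y))
    (v : ℝ) (hv : v ∈ Set.Ioc (0:ℝ) 1) :
    ∀ᵐ ω ∂μ, Filter.Tendsto
      (fun n => 1 - (1/v) * ∫ u in (0:ℝ)..1, empCopula X Y n ω u v)
      Filter.atTop (𝓝 (1 - (1/v) * ∫ u in (0:ℝ)..1, C u v)) :=
  tcte_estimator_strong_consistency_fixed_v_general μ X Y hindep hident Fx Fy hFx hFy hFxc hFyc C hC
    hlink v hv
end

section
/- Let C : [0,1]² → [0,1] be a copula that is differentiable with respect to its second argument at v = 0 uniformly in u ∈ [0,1], i.e., sup_{u∈[0,1]} |C(u,v)/v − ∂₂C(u,0)| → 0 as v → 0⁺. Let (Cₙ) be a sequence of measurable functions [0,1]² → [0,1] and (vₙ) a sequence in (0,1] such that vₙ → 0 and (1/vₙ) · sup_{(u,v)∈[0,1]²} |Cₙ(u,v) − C(u,v)| → 0 as n → ∞. Then 1 − (1/vₙ) ∫₀¹ Cₙ(u,vₙ) du converges, as n → ∞, to 1 − ∫₀¹ ∂₂C(u,0) du. -/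
/-! The functions `C(·,v)/v` are monotone by the 2-increasing property (as `C(u,0) = 0`), so their
uniform limit `g` is monotone and hence integrable on `[0,1]`. Then
`(1/vₙ)∫Cₙ(u,vₙ)du − ∫g = (1/vₙ)∫(Cₙ − C)(u,vₙ)du + ∫(C(u,vₙ)/vₙ − g(u))du` is bounded by
`(1/vₙ) sup|Cₙ − C| + sup_u |C(u,vₙ)/vₙ − g(u)|`, and both terms tend to zero. -/

open MeasureTheory Filter Set Topology

lemma tendstoUniformlyOn_nhdsGT_zero_of_abs_sub_le {β : Type*} {F : ℝ → β → ℝ} {g : β → ℝ}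
    {s : Set β} (h : ∀ ε > (0:ℝ), ∃ δ > (0:ℝ), ∀ v ∈ Ioo (0:ℝ) δ, ∀ u ∈ s, |F v u - g u| ≤ ε) :
    TendstoUniformlyOn F g (𝓝[>] 0) s := by
  refine Metric.tendstoUniformlyOn_iff.2 fun ε hε => ?_
  obtain ⟨δ, hδ, hF⟩ := h (ε / 2) (half_pos hε)
  filter_upwards [Ioo_mem_nhdsGT hδ] with v hv u hu
  rw [dist_comm, Real.dist_eq]
  exact (hF v hv u hu).trans_lt (half_lt_self hε)

namespace IsCopula

variable {C : ℝ → ℝ → ℝ}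

lemma monotoneOn_left (hC : IsCopula C) {v : ℝ} (hv : v ∈ Icc (0:ℝ) 1) :
    MonotoneOn (fun u => C u v) (Icc 0 1) := by
  intro u₁ hu₁ u₂ hu₂ hu
  have h2inc := hC.2.2 u₁ u₂ 0 v hu₁.1 hu hu₂.2 le_rfl hv.1 hv.2
  have h₁ := (hC.1 u₁ hu₁).1
  have h₂ := (hC.1 u₂ hu₂).1
  dsimp only
  linarith

lemma monotoneOn_of_tendsto_div (hC : IsCopula C) {g : ℝ → ℝ}
    (hg : ∀ u ∈ Icc (0:ℝ) 1, Tendsto (fun v => C u v / v) (𝓝[>] 0) (𝓝 (g u))) :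
    MonotoneOn g (Icc 0 1) := by
  refine monotoneOn_of_frequently_monotoneOn_of_tendsto (Eventually.frequently ?_) hg
  filter_upwards [Ioc_mem_nhdsGT zero_lt_one] with v hv
  exact fun u₁ hu₁ u₂ hu₂ hu =>
    div_le_div_of_nonneg_right (hC.monotoneOn_left (Ioc_subset_Icc_self hv) hu₁ hu₂ hu) hv.1.le

end IsCopula

lemma bddAbove_image_abs_sub_of_mem_Icc {α : Type*} {f h : α → ℝ} {s : Set α}
    (hf : ∀ p ∈ s, f p ∈ Icc (0:ℝ) 1) (hh : ∀ p ∈ s, h p ∈ Icc (0:ℝ) 1) :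
    BddAbove ((fun p => |f p - h p|) '' s) := by
  refine ⟨1, ?_⟩
  rintro _ ⟨p, hp, rfl⟩
  exact Real.dist_le_of_mem_Icc_01 (hf p hp) (hh p hp)

lemma Measurable.intervalIntegrable_of_abs_le {f : ℝ → ℝ} {a b M : ℝ} (hab : a ≤ b)
    (hf : Measurable f) (hM : ∀ u ∈ Icc a b, |f u| ≤ M) : IntervalIntegrable f volume a b := by
  refine (intervalIntegrable_const (c := M)).mono_fun' hf.aestronglyMeasurable ?_
  rw [uIoc_of_le hab]
  filter_upwards [ae_restrict_mem measurableSet_Ioc] with u hu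
  exact hM u (Ioc_subset_Icc_self hu)

lemma abs_inv_mul_integral_sub_integral_le {F G g : ℝ → ℝ} {a b v S ε : ℝ} (hab : a ≤ b)
    (hv : 0 < v) (hF : IntervalIntegrable F volume a b) (hg : IntervalIntegrable g volume a b)
    (hFG : ∀ u ∈ Icc a b, |F u - G u| ≤ S) (hGg : ∀ u ∈ Icc a b, |G u / v - g u| ≤ ε) :
    |v⁻¹ * (∫ u in a..b, F u) - ∫ u in a..b, g u| ≤ (v⁻¹ * S + ε) * (b - a) := by
  have hsplit : v⁻¹ * (∫ u in a..b, F u) - ∫ u in a..b, g u = ∫ u in a..b, (v⁻¹ * F u - g u) := by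
    rw [intervalIntegral.integral_sub (hF.const_mul _) hg, intervalIntegral.integral_const_mul]
  rw [hsplit, ← Real.norm_eq_abs, ← abs_of_nonneg (sub_nonneg.2 hab)]
  refine intervalIntegral.norm_integral_le_of_norm_le_const fun u hu => ?_
  rw [uIoc_of_le hab] at hu
  have hu := Ioc_subset_Icc_self hu
  calc ‖v⁻¹ * F u - g u‖ = |(F u - G u) / v + (G u / v - g u)| := by
        rw [Real.norm_eq_abs]
        congr 1
        field_simp
        ring
    _ ≤ |(F u - G u) / v| + |G u / v - g u| := abs_add_le _ _
    _ ≤ v⁻¹ * S + ε := by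
        rw [abs_div, abs_of_pos hv, div_eq_inv_mul]
        gcongr <;> [exact hFG u hu; exact hGg u hu]

/-- analytic core of Theorem 3.1, second part. If `C` is a copula that
is differentiable in its second argument at `v = 0` uniformly in `u` (with derivative
`g u = ∂₂C(u,0)`), `(Cₙ)` are `[0,1]`-valued measurable functions with
`(1/vₙ)·sup_{(u,v)} |Cₙ(u,v) − C(u,v)| → 0` and `vₙ → 0`, `vₙ ∈ (0,1]`, then
`1 − (1/vₙ)∫₀¹ Cₙ(u,vₙ) du → 1 − ∫₀¹ g(u) du`. -/
theorem tcte_deterministic_convergence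
    (C : ℝ → ℝ → ℝ) (hC : IsCopula C)
    (g : ℝ → ℝ)
    (hunif : ∀ ε > (0:ℝ), ∃ δ > (0:ℝ), ∀ v ∈ Set.Ioo (0:ℝ) δ, ∀ u ∈ Set.Icc (0:ℝ) 1,
      |C u v / v - g u| ≤ ε)
    (Cn : ℕ → ℝ → ℝ → ℝ)
    (hCnmeas : ∀ n, Measurable (fun p : ℝ × ℝ => Cn n p.1 p.2))
    (hCnrange : ∀ n, ∀ u ∈ Set.Icc (0:ℝ) 1, ∀ v ∈ Set.Icc (0:ℝ) 1,
      Cn n u v ∈ Set.Icc (0:ℝ) 1)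
    (vseq : ℕ → ℝ) (hv : ∀ n, vseq n ∈ Set.Ioc (0:ℝ) 1)
    (hv0 : Filter.Tendsto vseq Filter.atTop (𝓝 0))
    (hsup : Filter.Tendsto
      (fun n => (1/(vseq n)) *
        sSup ((fun p : ℝ × ℝ => |Cn n p.1 p.2 - C p.1 p.2|) ''
          (Set.Icc (0:ℝ) 1 ×ˢ Set.Icc (0:ℝ) 1)))
      Filter.atTop (𝓝 0)) :
    Filter.Tendsto (fun n => 1 - (1/(vseq n)) * ∫ u in (0:ℝ)..1, Cn n u (vseq n))
      Filter.atTop (𝓝 (1 - ∫ u in (0:ℝ)..1, g u)) := by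
  have hconv := tendstoUniformlyOn_nhdsGT_zero_of_abs_sub_le hunif
  have hg : IntervalIntegrable g volume 0 1 := by
    have hmono := hC.monotoneOn_of_tendsto_div fun u hu => hconv.tendsto_at hu
    rw [← uIcc_of_le zero_le_one] at hmono
    exact hmono.intervalIntegrable
  have hvGT : Tendsto vseq atTop (𝓝[>] 0) :=
    tendsto_nhdsWithin_iff.2 ⟨hv0, Eventually.of_forall fun n => (hv n).1⟩
  have hconv_seq := Metric.tendstoUniformlyOn_iff.1 (hconv.seq_tendstoUniformlyOn vseq hvGT)
  refine Tendsto.const_sub 1 (Metric.tendsto_nhds.2 fun ε hε => ?_)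
  filter_upwards [hconv_seq (ε / 2) (half_pos hε), hsup.eventually_lt_const (half_pos hε)]
    with n hCg hCnC
  obtain ⟨hvn, hvn1⟩ := hv n
  have hvn' : vseq n ∈ Icc (0:ℝ) 1 := ⟨hvn.le, hvn1⟩
  have hCn : IntervalIntegrable (fun u => Cn n u (vseq n)) volume 0 1 :=
    ((hCnmeas n).comp (measurable_id.prodMk measurable_const)).intervalIntegrable_of_abs_le
      zero_le_one fun u hu => (abs_of_nonneg (hCnrange n u hu _ hvn').1).trans_le
        (hCnrange n u hu _ hvn').2
  have hbdd := bddAbove_image_abs_sub_of_mem_Icc (f := fun p : ℝ × ℝ => Cn n p.1 p.2)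
    (s := Icc 0 1 ×ˢ Icc 0 1)
    (fun p hp => hCnrange n p.1 hp.1 p.2 hp.2) (fun p hp => hC.2.1 p.1 hp.1 p.2 hp.2)
  have hest := abs_inv_mul_integral_sub_integral_le zero_le_one hvn hCn hg
    (fun u hu => le_csSup hbdd ⟨(u, vseq n), ⟨hu, hvn'⟩, rfl⟩)
    (fun u hu => by rw [abs_sub_comm, ← Real.dist_eq]; exact (hCg u hu).le)
  rw [one_div] at hCnC ⊢
  rw [Real.dist_eq]
  linarith
end

section
/- For the independence copula C(u,v) = uv, the asymptotic variance of the TCTE estimator equals σ²_C(v) = 1/(12v) − 1/12 for every v ∈ (0,1]. That is, (2/v²) ∫₀¹ ∫₀^w { C(u,v)(1−C(w,v)) + ∂₂C(u,v)∂₂C(w,v)·v(1−v) + ∂₁C(u,v)∂₁C(w,v)·u(1−w) − ∂₂C(u,v)C(w,v)(1−v) − ∂₂C(w,v)C(u,v)(1−v) − ∂₁C(u,v)[C(u,v) − C(w,v)u] − ∂₁C(w,v)C(u,v)(1−w) + ∂₂C(u,v)∂₁C(w,v)(C(w,v) − vw) + ∂₂C(w,v)∂₁C(u,v)(C(u,v)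 − vu) } du dw = 1/(12v) − 1/12, where for C(u,v) = uv one has ∂₁C(u,v) = v and ∂₂C(u,v) = u. In particular σ²_C(v) is decreasing in v and σ²_C(1) = 0. -/
/-!
For `C(u,v) = uv` all terms of the integrand cancel except `v(1-v)(1-w)u`, so the double
integral is `v(1-v) ∫₀¹ w²(1-w)/2 dw = v(1-v)/24` and `σ²_C(v) = (1-v)/(12v)`.
-/

open MeasureTheory Filter Set

/-- The asymptotic variance `σ²_C(v)` of the TCTE estimator (Theorem 3.2), for a copula
`D` with partial derivatives `D1 = ∂₁D` and `D2 = ∂₂D`. -/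
noncomputable def sigmaSq (D D1 D2 : ℝ → ℝ → ℝ) (v : ℝ) : ℝ :=
  (2 / v^2) * ∫ w in (0:ℝ)..1, ∫ u in (0:ℝ)..w,
    (D u v * (1 - D w v) + D2 u v * D2 w v * (v * (1 - v))
      + D1 u v * D1 w v * (u * (1 - w))
      - D2 u v * D w v * (1 - v) - D2 w v * D u v * (1 - v)
      - D1 u v * (D u v - D w v * u) - D1 w v * D u v * (1 - w)
      + D2 u v * D1 w v * (D w v - v * w) + D2 w v * D1 u v * (D u v - v * u))

lemma integral_zero_one_sq_mul_one_sub :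
    ∫ w in (0:ℝ)..1, w ^ 2 * (1 - w) = 1 / 12 := by
  have hexpand : (fun w : ℝ => w ^ 2 * (1 - w)) = fun w => w ^ 2 - w ^ 3 := by
    ext w; ring
  rw [hexpand, intervalIntegral.integral_sub ((continuous_pow 2).intervalIntegrable 0 1)
    ((continuous_pow 3).intervalIntegrable 0 1), integral_pow, integral_pow]
  norm_num

lemma sigmaSq_independence_eq_integral (v : ℝ) :
    sigmaSq (fun u v' => u * v') (fun _ v' => v') (fun u _ => u) v
      = 2 / v ^ 2 * ∫ w in (0:ℝ)..1, ∫ u in (0:ℝ)..w, v * (1 - v) * (1 - w) * u := by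
  unfold sigmaSq
  congr 3 with w
  congr 1 with u
  ring

lemma sigmaSq_independence_eq {v : ℝ} (hv : v ≠ 0) :
    sigmaSq (fun u v' => u * v') (fun _ v' => v') (fun u _ => u) v = 1 / (12 * v) - 1 / 12 := by
  have hinner : ∀ w : ℝ, ∫ u in (0:ℝ)..w, v * (1 - v) * (1 - w) * u
      = v * (1 - v) / 2 * (w ^ 2 * (1 - w)) := by
    intro w
    rw [intervalIntegral.integral_const_mul, integral_id]
    ring
  simp_rw [sigmaSq_independence_eq_integral, hinner]
  rw [intervalIntegral.integral_const_mul, integral_zero_one_sq_mul_one_sub]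
  field_simp

/-- For the independence copula `C(u,v) = uv` (so `∂₁C(u,v) = v` and
`∂₂C(u,v) = u`), the asymptotic variance equals `σ²_C(v) = 1/(12v) − 1/12` for every
`v ∈ (0,1]`; in particular it is decreasing in `v` and vanishes at `v = 1`. -/
theorem sigmaSq_independence_copula :
    (∀ v ∈ Set.Ioc (0:ℝ) 1,
      sigmaSq (fun u v' => u * v') (fun _ v' => v') (fun u _ => u) v
        = 1/(12*v) - 1/12) ∧
    (∀ v₁ ∈ Set.Ioc (0:ℝ) 1, ∀ v₂ ∈ Set.Ioc (0:ℝ) 1, v₁ < v₂ →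
      sigmaSq (fun u v' => u * v') (fun _ v' => v') (fun u _ => u) v₂
        < sigmaSq (fun u v' => u * v') (fun _ v' => v') (fun u _ => u) v₁) ∧
    sigmaSq (fun u v' => u * v') (fun _ v' => v') (fun u _ => u) 1 = 0 := by
  refine ⟨fun v hv => sigmaSq_independence_eq hv.1.ne', ?_, ?_⟩
  · intro v₁ hv₁ v₂ hv₂ h12
    rw [sigmaSq_independence_eq hv₁.1.ne', sigmaSq_independence_eq hv₂.1.ne']
    have hrecip : 1 / (12 * v₂) < 1 / (12 * v₁) :=
      one_div_lt_one_div_of_lt (by linarith [hv₁.1]) (by linarith)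
    linarith
  · rw [sigmaSq_independence_eq one_ne_zero]
    norm_num
end

section
/- Let C be a copula and δ ∈ (0,1), and let K_δ(u,v) = u^δ C(u^{1−δ}, v) be the associated Khoudraji copula. Then: (i) for every v ∈ (0,1], χ^{X→Y}_{K_δ}(v) = 1 − v^{δ−1} ∫₀¹ C(v^{1−δ}, u) du = χ^{X→Y}_C(v^{1−δ}); and (ii) if the limit L := lim_{w→0⁺} (1/w) ∫₀¹ C(w,u) du exists, then lim_{v→0⁺} v^{δ−1} ∫₀¹ C(v^{1−δ}, u) du = L, so that the limiting TCTEs coincide: χ^{X→Y}_{K_δ} = χ^{X→Y}_C. -/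
open MeasureTheory Filter Set Topology

/-- The Khoudraji copula `K_δ(u,v) = u^δ C(u^{1−δ}, v)` built from a copula `C`. -/
noncomputable def khoudraji (C : ℝ → ℝ → ℝ) (δ : ℝ) (u v : ℝ) : ℝ :=
  u ^ δ * C (u ^ (1 - δ)) v

lemma khoudraji_key (C : ℝ → ℝ → ℝ) (δ : ℝ) (v : ℝ) (hv : 0 < v) :
    (1/v) * ∫ u in (0:ℝ)..1, khoudraji C δ v u
      = v ^ (δ - 1) * ∫ u in (0:ℝ)..1, C (v ^ (1 - δ)) u := by
  have h1 : (∫ u in (0:ℝ)..1, khoudraji C δ v u)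
      = v ^ δ * ∫ u in (0:ℝ)..1, C (v ^ (1 - δ)) u := by
    simp [khoudraji, intervalIntegral.integral_const_mul]
  rw [h1, ← mul_assoc]
  congr 1
  rw [Real.rpow_sub hv, Real.rpow_one]
  field_simp

lemma rpow_eq_inv (v : ℝ) (hv : 0 < v) (δ : ℝ) :
    v ^ (δ - 1) = 1 / (v ^ (1 - δ)) := by
  rw [one_div, ← Real.rpow_neg hv.le]
  ring_nf

/-- For a copula `C` and `δ ∈ (0,1)`: (i) for every `v ∈ (0,1]`,
`χ^{X→Y}_{K_δ}(v) = 1 − v^{δ−1} ∫₀¹ C(v^{1−δ}, u) du = χ^{X→Y}_C(v^{1−δ})`; and (ii) if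
`L = lim_{w→0⁺} (1/w) ∫₀¹ C(w,u) du` exists, then
`lim_{v→0⁺} v^{δ−1} ∫₀¹ C(v^{1−δ}, u) du = L`, so the limiting TCTEs coincide:
`χ^{X→Y}_{K_δ} = χ^{X→Y}_C = 1 − L`. -/
theorem khoudraji_tcte
    (C : ℝ → ℝ → ℝ) (hC : IsCopula C) (δ : ℝ) (hδ : δ ∈ Set.Ioo (0:ℝ) 1) :
    (∀ v ∈ Set.Ioc (0:ℝ) 1,
      (1 - (1/v) * ∫ u in (0:ℝ)..1, khoudraji C δ v u)
          = 1 - v ^ (δ - 1) * ∫ u in (0:ℝ)..1, C (v ^ (1 - δ)) u ∧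
      (1 - (1/v) * ∫ u in (0:ℝ)..1, khoudraji C δ v u)
          = 1 - (1/(v ^ (1 - δ))) * ∫ u in (0:ℝ)..1, C (v ^ (1 - δ)) u) ∧
    (∀ L : ℝ,
      Filter.Tendsto (fun w => (1/w) * ∫ u in (0:ℝ)..1, C w u) (𝓝[>] (0:ℝ)) (𝓝 L) →
      Filter.Tendsto (fun v => v ^ (δ - 1) * ∫ u in (0:ℝ)..1, C (v ^ (1 - δ)) u)
          (𝓝[>] (0:ℝ)) (𝓝 L) ∧
      Filter.Tendsto (fun v => 1 - (1/v) * ∫ u in (0:ℝ)..1, khoudraji C δ v u)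
          (𝓝[>] (0:ℝ)) (𝓝 (1 - L))) := by
  obtain ⟨hδ0, hδ1⟩ := hδ
  have hδ' : 0 < 1 - δ := by linarith
  constructor
  · rintro v ⟨hv, -⟩
    have key := khoudraji_key C δ v hv
    refine ⟨by rw [key], ?_⟩
    rw [key, rpow_eq_inv v hv δ]
  · intro L hL
    have htend : Filter.Tendsto (fun v : ℝ => v ^ (1 - δ)) (𝓝[>] (0:ℝ)) (𝓝[>] (0:ℝ)) := by
      apply tendsto_nhdsWithin_of_tendsto_nhds_of_eventually_within
      · have hc : ContinuousAt (fun v : ℝ => v ^ (1 - δ)) 0 :=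
          Real.continuousAt_rpow_const 0 (1 - δ) (Or.inr hδ'.le)
        have h0 : (0:ℝ) ^ (1 - δ) = 0 := Real.zero_rpow (by linarith)
        simpa [h0] using (hc.continuousWithinAt (s := Set.Ioi 0)).tendsto
      · filter_upwards [self_mem_nhdsWithin] with v hv
        exact Real.rpow_pos_of_pos hv _
    have hcomp := hL.comp htend
    have h1 : Filter.Tendsto (fun v => v ^ (δ - 1) * ∫ u in (0:ℝ)..1, C (v ^ (1 - δ)) u)
        (𝓝[>] (0:ℝ)) (𝓝 L) := by
      apply hcomp.congr'
      filter_upwards [self_mem_nhdsWithin] with v hv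
      simp only [Function.comp]
      rw [rpow_eq_inv v hv δ]
    refine ⟨h1, ?_⟩
    have h2 := (tendsto_const_nhds : Filter.Tendsto (fun _ : ℝ => (1:ℝ)) (𝓝[>] (0:ℝ)) (𝓝 1)).sub h1
    apply h2.congr'
    filter_upwards [self_mem_nhdsWithin] with v hv
    rw [khoudraji_key C δ v hv]
end

section
/- Let θ > 0 and let C_θ(u,v) = (u^{−θ} + v^{−θ} − 1)^{−1/θ} for u, v ∈ (0,1], extended by C_θ(u,0) = C_θ(0,v) = 0, be the Clayton copula. Then lim_{v→0⁺} (1/v) ∫₀¹ C_θ(u,v) du = 1; equivalently, the limiting transformed conditional tail expectation satisfies χ^{Y→X}_{C_θ} = lim_{v→0⁺} [1 − (1/v) ∫₀¹ C_θ(u,v) du] = 0. -/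
open MeasureTheory Filter Set Topology

/-- The Clayton copula with parameter `θ > 0`, extended by `0` when either argument is
not positive. -/
noncomputable def clayton (θ : ℝ) (u v : ℝ) : ℝ :=
  if 0 < u ∧ 0 < v then (u ^ (-θ) + v ^ (-θ) - 1) ^ (-1/θ) else 0

lemma clayton_base_ge {θ u v : ℝ} (hθ : 0 < θ) (hu : 0 < u) (hu1 : u ≤ 1) :
    v ^ (-θ) ≤ u ^ (-θ) + v ^ (-θ) - 1 := by
  have h1 : (1:ℝ) ≤ u ^ (-θ) :=
    Real.one_le_rpow_of_pos_of_le_one_of_nonpos hu hu1 (by linarith)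
  linarith

lemma clayton_div_eq {θ u v : ℝ} (hθ : 0 < θ) (hu : 0 < u) (hu1 : u ≤ 1) (hv : 0 < v) :
    (1/v) * clayton θ u v = (1 + v ^ θ * (u ^ (-θ) - 1)) ^ (-1/θ) := by
  have hvθ : (0:ℝ) < v ^ (-θ) := Real.rpow_pos_of_pos hv _
  have hA : (0:ℝ) < u ^ (-θ) + v ^ (-θ) - 1 :=
    lt_of_lt_of_le hvθ (clayton_base_ge hθ hu hu1)
  have hvv : v ^ (-θ) * v ^ θ = 1 := by
    rw [← Real.rpow_add hv]; simp
  have hprod : (u ^ (-θ) + v ^ (-θ) - 1) * v ^ θ = 1 + v ^ θ * (u ^ (-θ) - 1) := by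
    linear_combination hvv
  have hpow : (v ^ θ) ^ (-1/θ) = v⁻¹ := by
    rw [← Real.rpow_mul hv.le, show θ * (-1/θ) = -1 by field_simp, Real.rpow_neg_one]
  rw [clayton, if_pos ⟨hu, hv⟩, ← hprod,
    Real.mul_rpow hA.le (Real.rpow_nonneg hv.le θ), hpow]
  ring

lemma clayton_nonneg {θ u v : ℝ} (hθ : 0 < θ) (hu : 0 < u) (hu1 : u ≤ 1) (hv : 0 < v) :
    0 ≤ clayton θ u v := by
  have hvθ : (0:ℝ) < v ^ (-θ) := Real.rpow_pos_of_pos hv _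
  have hA : (0:ℝ) < u ^ (-θ) + v ^ (-θ) - 1 :=
    lt_of_lt_of_le hvθ (clayton_base_ge hθ hu hu1)
  rw [clayton, if_pos ⟨hu, hv⟩]
  exact Real.rpow_nonneg hA.le _

lemma clayton_le {θ u v : ℝ} (hθ : 0 < θ) (hu : 0 < u) (hu1 : u ≤ 1) (hv : 0 < v) :
    clayton θ u v ≤ v := by
  have hvθ : (0:ℝ) < v ^ (-θ) := Real.rpow_pos_of_pos hv _
  have h1 : (u ^ (-θ) + v ^ (-θ) - 1) ^ (-1/θ) ≤ (v ^ (-θ)) ^ (-1/θ) :=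
    Real.rpow_le_rpow_of_nonpos hvθ (clayton_base_ge hθ hu hu1)
      (by rw [neg_div]; exact neg_nonpos.mpr (by positivity))
  have h2 : (v ^ (-θ)) ^ (-1/θ) = v := by
    rw [← Real.rpow_mul hv.le, show (-θ) * (-1/θ) = 1 by field_simp, Real.rpow_one]
  rw [clayton, if_pos ⟨hu, hv⟩]
  linarith [h1, h2.le, h2.ge]

/-- For the Clayton copula with parameter `θ > 0`,
`lim_{v→0⁺} (1/v) ∫₀¹ C_θ(u,v) du = 1`; equivalently the limiting TCTE satisfies
`χ^{Y→X}_{C_θ} = lim_{v→0⁺} [1 − (1/v) ∫₀¹ C_θ(u,v) du] = 0`. -/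
theorem clayton_limiting_tcte (θ : ℝ) (hθ : 0 < θ) :
    Filter.Tendsto (fun v => (1/v) * ∫ u in (0:ℝ)..1, clayton θ u v)
      (𝓝[>] (0:ℝ)) (𝓝 1) ∧
    Filter.Tendsto (fun v => 1 - (1/v) * ∫ u in (0:ℝ)..1, clayton θ u v)
      (𝓝[>] (0:ℝ)) (𝓝 0) := by
  have hmain : Filter.Tendsto (fun v => (1/v) * ∫ u in (0:ℝ)..1, clayton θ u v)
      (𝓝[>] (0:ℝ)) (𝓝 1) := by
    have key : Filter.Tendsto (fun v => ∫ u in (0:ℝ)..1, (1/v) * clayton θ u v)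
        (𝓝[>] (0:ℝ)) (𝓝 (∫ u in (0:ℝ)..1, (1:ℝ))) := by
      apply intervalIntegral.tendsto_integral_filter_of_dominated_convergence
        (bound := fun _ => (1:ℝ))
      · -- measurability
        filter_upwards [self_mem_nhdsWithin] with v hv
        have hv : (0:ℝ) < v := hv
        have hg : ContinuousOn
            (fun u : ℝ => (1/v) * ((u ^ (-θ) + v ^ (-θ) - 1) ^ (-1/θ))) (Set.Ioc 0 1) := by
          apply continuousOn_const.mul
          apply ContinuousOn.rpow_const
          · exact ((continuousOn_id.rpow_const fun x hx => Or.inl (ne_of_gt hx.1)).add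
              continuousOn_const).sub continuousOn_const
          · intro u hu
            have hvθ : (0:ℝ) < v ^ (-θ) := Real.rpow_pos_of_pos hv _
            exact Or.inl (ne_of_gt (lt_of_lt_of_le hvθ (clayton_base_ge hθ hu.1 hu.2)))
        rw [Set.uIoc_of_le (zero_le_one' ℝ)]
        refine (hg.aestronglyMeasurable measurableSet_Ioc).congr ?_
        filter_upwards [ae_restrict_mem measurableSet_Ioc] with u hu
        rw [clayton, if_pos ⟨hu.1, hv⟩]
      · -- bound
        filter_upwards [self_mem_nhdsWithin] with v hv
        have hv : (0:ℝ) < v := hv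
        filter_upwards with u hu
        rw [Set.uIoc_of_le (zero_le_one' ℝ)] at hu
        have h0 := clayton_nonneg hθ hu.1 hu.2 hv
        have h1 := clayton_le hθ hu.1 hu.2 hv
        rw [Real.norm_eq_abs, abs_of_nonneg (by positivity)]
        calc (1/v) * clayton θ u v ≤ (1/v) * v := by
              apply mul_le_mul_of_nonneg_left h1 (by positivity)
          _ = 1 := by field_simp
      · exact intervalIntegrable_const
      · -- pointwise limit
        filter_upwards with u hu
        rw [Set.uIoc_of_le (zero_le_one' ℝ)] at hu
        have heq : ∀ᶠ v in 𝓝[>] (0:ℝ),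
            (1 + v ^ θ * (u ^ (-θ) - 1)) ^ (-1/θ) = (1/v) * clayton θ u v := by
          filter_upwards [self_mem_nhdsWithin] with v hv
          exact (clayton_div_eq hθ hu.1 hu.2 hv).symm
        have h1 : Filter.Tendsto (fun v : ℝ => v ^ θ) (𝓝[>] (0:ℝ)) (𝓝 0) := by
          have := (Real.continuousAt_rpow_const 0 θ (Or.inr hθ.le)).tendsto
          rw [Real.zero_rpow hθ.ne'] at this
          exact this.mono_left nhdsWithin_le_nhds
        have h2 : Filter.Tendsto (fun v : ℝ => 1 + v ^ θ * (u ^ (-θ) - 1))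
            (𝓝[>] (0:ℝ)) (𝓝 1) := by
          have := (h1.mul_const (u ^ (-θ) - 1)).const_add 1
          simpa using this
        have h3 : Filter.Tendsto (fun v : ℝ => (1 + v ^ θ * (u ^ (-θ) - 1)) ^ (-1/θ))
            (𝓝[>] (0:ℝ)) (𝓝 1) := by
          have hc := (Real.continuousAt_rpow_const 1 (-1/θ) (Or.inl one_ne_zero)).tendsto
          rw [Real.one_rpow] at hc
          exact hc.comp h2
        exact h3.congr' heq
    have : (∫ u in (0:ℝ)..1, (1:ℝ)) = 1 := by simp
    rw [this] at key
    apply key.congr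
    intro v
    rw [intervalIntegral.integral_const_mul]
  exact ⟨hmain, by simpa using hmain.const_sub 1⟩
end
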